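/- arXiv:2010.14990 — 9 statements merged into one kernel-verified Lean document; each statement's English description precedes it below -/
import Mathlib

section
/- For every positive integer m there exist a constant C > 0 and x₀ such that for all x ≥ x₀, the number of integers n with 2 ≤ n ≤ x and f_{-m}(n) = f_{-m}(n+1) is at most x^{C·(log log x / log x)^{m/(m+1)}}. -/
set_option maxHeartbeats 1000000

/-- The Ruth–Aaron function: for `n = p₁^{a₁} ⋯ p_k^{a_k}`,
`fr r n = ∑ aᵢ · pᵢ^r` (real power); `fr r 1 = 0`.
In particular `fr (-m) n = ∑ aᵢ / pᵢ^m`. -/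
noncomputable def fr (r : ℝ) (n : ℕ) : ℝ :=
  ∑ p ∈ n.primeFactors, (n.factorization p : ℝ) * (p : ℝ) ^ r

noncomputable def g (m n : ℕ) : ℚ :=
  ∑ p ∈ n.primeFactors, (n.factorization p : ℚ) / (p : ℚ) ^ m

lemma fr_eq_g (m n : ℕ) : fr (-(m : ℝ)) n = (g m n : ℝ) := by
  unfold fr g
  push_cast
  refine Finset.sum_congr rfl fun p hp => ?_
  have hp0 : (0:ℝ) ≤ (p:ℝ) := by positivity
  rw [Real.rpow_neg hp0, Real.rpow_natCast]
  ring

lemma key_dvd (m n : ℕ) (h : g m n = g m (n + 1)) :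
    ∀ q ∈ n.primeFactors, q ^ m ∣ n.factorization q := by
  intro q hq
  have hqp : q.Prime := Nat.prime_of_mem_primeFactors hq
  have hqn : q ∣ n := Nat.dvd_of_mem_primeFactors hq
  set P : Finset ℕ := n.primeFactors.erase q with hP
  set P' : Finset ℕ := (n+1).primeFactors with hP'
  have hqP : q ∉ P := Finset.notMem_erase _ _
  have hqP' : q ∉ P' := by
    intro hmem
    have h1 : q ∣ n + 1 := Nat.dvd_of_mem_primeFactors hmem
    have h2 : q ∣ 1 := (Nat.dvd_add_right hqn).mp h1
    exact hqp.ne_one (Nat.dvd_one.mp h2)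
  set N : ℕ := (∏ p ∈ P, p ^ m) * ∏ p ∈ P', p ^ m with hN
  have hdvdP : ∀ p ∈ P, p ^ m ∣ N := fun p hp =>
    Dvd.dvd.mul_right (Finset.dvd_prod_of_mem _ hp) _
  have hdvdP' : ∀ p ∈ P', p ^ m ∣ N := fun p hp =>
    Dvd.dvd.mul_left (Finset.dvd_prod_of_mem _ hp) _
  -- the two natural-number sums
  set A : ℕ := ∑ p ∈ P, n.factorization p * (N / p ^ m) with hA
  set B : ℕ := ∑ p ∈ P', (n+1).factorization p * (N / p ^ m) with hB
  -- the rational identity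
  have cast_term : ∀ (s : Finset ℕ) (a : ℕ → ℕ), (∀ p ∈ s, p ^ m ∣ N) → (∀ p ∈ s, p.Prime) →
      ((∑ p ∈ s, a p * (N / p ^ m) : ℕ) : ℚ) = (∑ p ∈ s, (a p : ℚ) / (p:ℚ) ^ m) * N := by
    intro s a hdvd hprime
    push_cast
    rw [Finset.sum_mul]
    refine Finset.sum_congr rfl fun p hp => ?_
    have hpm : ((p:ℚ)) ^ m ≠ 0 := by
      have : (0:ℚ) < (p:ℚ) := by exact_mod_cast (hprime p hp).pos
      positivity
    rw [Nat.cast_div (hdvd p hp) (by exact_mod_cast hpm)]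
    push_cast
    field_simp
  have hAq : (A : ℚ) = (∑ p ∈ P, (n.factorization p : ℚ) / (p:ℚ) ^ m) * N :=
    cast_term P _ hdvdP (fun p hp => Nat.prime_of_mem_primeFactors (Finset.mem_of_mem_erase hp))
  have hBq : (B : ℚ) = (∑ p ∈ P', ((n+1).factorization p : ℚ) / (p:ℚ) ^ m) * N :=
    cast_term P' _ hdvdP' (fun p hp => Nat.prime_of_mem_primeFactors hp)
  -- split g m n
  have hsplit : (n.factorization q : ℚ) / (q:ℚ) ^ m + ∑ p ∈ P, (n.factorization p : ℚ) / (p:ℚ) ^ m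
      = g m n := by
    rw [hP, g]
    exact Finset.add_sum_erase _ (fun p => (n.factorization p : ℚ) / (p:ℚ) ^ m) hq
  have hqm0 : ((q:ℚ)) ^ m ≠ 0 := by
    have : (0:ℚ) < (q:ℚ) := by exact_mod_cast hqp.pos
    positivity
  have hN0 : N ≠ 0 := by
    apply Nat.mul_ne_zero <;>
    · apply Finset.prod_ne_zero_iff.mpr
      intro p hp
      have : p.Prime := by
        first
        | exact Nat.prime_of_mem_primeFactors (Finset.mem_of_mem_erase hp)
        | exact Nat.prime_of_mem_primeFactors hp
      exact pow_ne_zero _ this.pos.ne'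
  -- main rational equation multiplied out
  have main : (n.factorization q : ℚ) * N + A * (q:ℚ) ^ m = B * (q:ℚ) ^ m := by
    have e1 : (n.factorization q : ℚ) / (q:ℚ) ^ m * N
        + (∑ p ∈ P, (n.factorization p : ℚ) / (p:ℚ) ^ m) * N
        = (∑ p ∈ P', ((n+1).factorization p : ℚ) / (p:ℚ) ^ m) * N := by
      rw [← add_mul, hsplit, h, g, ← hP']
    rw [hAq, hBq, ← e1]
    field_simp
  have mainN : n.factorization q * N + A * q ^ m = B * q ^ m := by exact_mod_cast main
  have hdvd1 : q ^ m ∣ n.factorization q * N := by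
    have h1 : q ^ m ∣ n.factorization q * N + A * q ^ m := mainN ▸ Dvd.intro_left B rfl
    have := Nat.dvd_sub h1 (Dvd.intro_left A rfl)
    simpa using this
  -- coprimality
  have hcop : Nat.Coprime q N := by
    rw [Nat.Prime.coprime_iff_not_dvd hqp]
    intro hdvd
    rcases (Nat.Prime.dvd_mul hqp).mp hdvd with hc | hc
    · obtain ⟨p, hp, hqpm⟩ := hqp.prime.exists_mem_finset_dvd hc
      have hpp : p.Prime := Nat.prime_of_mem_primeFactors (Finset.mem_of_mem_erase hp)
      have : q = p := (Nat.prime_dvd_prime_iff_eq hqp hpp).mp (hqp.dvd_of_dvd_pow hqpm)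
      exact (Finset.ne_of_mem_erase hp) this.symm
    · obtain ⟨p, hp, hqpm⟩ := hqp.prime.exists_mem_finset_dvd hc
      have hpp : p.Prime := Nat.prime_of_mem_primeFactors hp
      have : q = p := (Nat.prime_dvd_prime_iff_eq hqp hpp).mp (hqp.dvd_of_dvd_pow hqpm)
      exact hqP' (this ▸ hp)
  exact (Nat.Coprime.pow_left m hcop).dvd_of_dvd_mul_right hdvd1


lemma prod_range_getD (l : List ℕ) (f : ℕ → ℕ) :
    ∏ i ∈ Finset.range l.length, f (l.getD i 1) = (l.map f).prod := by
  induction l with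
  | nil => simp
  | cons a t ih =>
    rw [List.length_cons, Finset.prod_range_succ']
    simp only [List.getD_cons_succ, List.getD_cons_zero, List.map_cons, List.prod_cons]
    rw [ih, mul_comm]

lemma prod_range_getD' (l : List ℕ) (f : ℕ → ℕ) (K : ℕ) (hK : l.length ≤ K) (hf1 : f 1 = 1) :
    ∏ i ∈ Finset.range K, f (l.getD i 1) = (l.map f).prod := by
  rw [← prod_range_getD l f]
  apply (Finset.prod_subset (Finset.range_subset_range.mpr hK) _).symm
  intro i _ hi
  rw [List.getD_eq_default, hf1]
  simpa using Finset.mem_range.not.mp hi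

lemma decode_encode (n K : ℕ) (hn : n ≠ 0) (hK : n.primeFactors.card ≤ K) :
    ∏ i ∈ Finset.range K,
      (n.primeFactors.toList.getD i 1) ^ n.factorization (n.primeFactors.toList.getD i 1) = n := by
  rw [prod_range_getD' n.primeFactors.toList (fun p => p ^ n.factorization p) K
    (by rw [Finset.length_toList]; exact hK) (one_pow _), Finset.prod_map_toList]
  rw [← Nat.support_factorization]
  simpa [Finsupp.prod] using Nat.factorization_prod_pow_eq_self hn

lemma card_bound (L K : ℕ) (hL : 1 ≤ L) (T : Finset ℕ)
    (hT : ∀ n ∈ T, n ≠ 0 ∧ n.primeFactors.card ≤ K ∧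
      ∀ p ∈ n.primeFactors, p ≤ L ∧ n.factorization p ≤ L) :
    T.card ≤ ((L+1)^2)^K := by
  classical
  set enc : ℕ → (Fin K → ℕ × ℕ) := fun n i =>
    ((n.primeFactors.toList.getD i 1), n.factorization (n.primeFactors.toList.getD i 1)) with henc
  set t : Finset (Fin K → ℕ × ℕ) :=
    Fintype.piFinset (fun _ => (Finset.range (L+1)) ×ˢ (Finset.range (L+1))) with ht
  have hmaps : ∀ n ∈ T, enc n ∈ t := by
    intro n hn
    obtain ⟨hn0, hcard, hpa⟩ := hT n hn
    rw [ht, Fintype.mem_piFinset]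
    intro i
    rw [Finset.mem_product, Finset.mem_range, Finset.mem_range]
    simp only [henc]
    by_cases hi : (i : ℕ) < n.primeFactors.toList.length
    · have hmem : n.primeFactors.toList.getD i 1 ∈ n.primeFactors := by
        rw [List.getD_eq_getElem _ _ hi]
        exact Finset.mem_toList.mp (List.getElem_mem _)
      obtain ⟨h1, h2⟩ := hpa _ hmem
      exact ⟨Nat.lt_succ_of_le h1, Nat.lt_succ_of_le h2⟩
    · rw [List.getD_eq_default _ _ (le_of_not_gt hi)]
      constructor
      · omega
      · simp [Nat.factorization_eq_zero_of_not_prime n Nat.not_prime_one]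
  have hinj : Set.InjOn enc ↑T := by
    intro a ha b hb hab
    obtain ⟨ha0, haK, _⟩ := hT a ha
    obtain ⟨hb0, hbK, _⟩ := hT b hb
    have da := decode_encode a K ha0 haK
    have db := decode_encode b K hb0 hbK
    rw [← da, ← db]
    refine Finset.prod_congr rfl fun i hi => ?_
    have : enc a ⟨i, Finset.mem_range.mp hi⟩ = enc b ⟨i, Finset.mem_range.mp hi⟩ := by rw [hab]
    rw [henc] at this
    simp only [Prod.mk.injEq] at this
    rw [this.2, this.1]
  calc T.card ≤ t.card := Finset.card_le_card_of_injOn enc hmaps hinj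
    _ = ((L+1)^2)^K := by
        rw [ht, Fintype.card_piFinset]
        simp [Finset.card_range, sq]


lemma sum_le_log (m n : ℕ) (hn : n ≠ 0)
    (h : ∀ p ∈ n.primeFactors, p ^ m ∣ n.factorization p) :
    ∑ p ∈ n.primeFactors, (p:ℝ) ^ m * Real.log p ≤ Real.log n := by
  have hdvd : (∏ p ∈ n.primeFactors, p ^ (p ^ m)) ∣ n := by
    have h1 : (∏ p ∈ n.primeFactors, p ^ (p ^ m)) ∣ ∏ p ∈ n.primeFactors, p ^ n.factorization p :=
      Finset.prod_dvd_prod_of_dvd _ _ fun p hp => pow_dvd_pow p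
        (Nat.le_of_dvd ((Nat.prime_of_mem_primeFactors hp).factorization_pos_of_dvd hn
          (Nat.dvd_of_mem_primeFactors hp)) (h p hp))
    have h2 : ∏ p ∈ n.primeFactors, p ^ n.factorization p = n := by
      rw [← Nat.support_factorization]
      simpa [Finsupp.prod] using Nat.factorization_prod_pow_eq_self hn
    rwa [h2] at h1
  have hle : ((∏ p ∈ n.primeFactors, p ^ (p ^ m) : ℕ) : ℝ) ≤ (n : ℝ) := by
    exact_mod_cast Nat.le_of_dvd (Nat.pos_of_ne_zero hn) hdvd
  have hprodpos : 0 < ∏ p ∈ n.primeFactors, p ^ (p ^ m) :=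
    Finset.prod_pos fun p hp => pow_pos (Nat.prime_of_mem_primeFactors hp).pos _
  have hlog := Real.log_le_log (by exact_mod_cast hprodpos) hle
  rw [Nat.cast_prod, Real.log_prod] at hlog
  · refine le_trans (le_of_eq ?_) hlog
    refine Finset.sum_congr rfl fun p hp => ?_
    rw [Nat.cast_pow, Real.log_pow]
    push_cast
    ring
  · intro p hp
    have := (Nat.prime_of_mem_primeFactors hp).pos
    positivity

lemma card_filter_gt (s : Finset ℕ) (hs : ∀ p ∈ s, 2 ≤ p) (t : ℕ) :
    s.card ≤ (s.filter (fun p => t < p)).card + (t - 1) := by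
  classical
  have h1 : s.filter (fun p => ¬ t < p) ⊆ Finset.Icc 2 t := by
    intro p hp
    rw [Finset.mem_filter] at hp
    rw [Finset.mem_Icc]
    exact ⟨hs p hp.1, by omega⟩
  have h2 := Finset.card_le_card h1
  rw [Nat.card_Icc] at h2
  have := Finset.card_filter_add_card_filter_not (s := s) (p := fun p => t < p)
  omega

lemma omega_bound (m : ℕ) (lx llx : ℝ)
    (hlx : 0 ≤ lx) (hllx : 0 ≤ llx)
    (hE1 : (8:ℝ)^(m+1) * llx ≤ lx) (hE2 : llx * Real.exp (llx/2) ≤ lx)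
    (n : ℕ)
    (hprime : ∀ p ∈ n.primeFactors, 2 ≤ p)
    (hsum : ∑ p ∈ n.primeFactors, (p:ℝ)^m * Real.log p ≤ lx) :
    (n.primeFactors.card : ℝ)^(m+1) * llx ≤ (2*(m+1)*3^(m+1)+1 : ℝ) * lx := by
  set k := n.primeFactors.card with hk
  have hC1 : (1:ℝ) ≤ 2*(m+1)*3^(m+1)+1 := by
    have h0 : (0:ℝ) ≤ 2*(m+1)*3^(m+1) := by positivity
    linarith
  by_cases hk8 : k ≤ 8
  · calc (k:ℝ)^(m+1) * llx ≤ (8:ℝ)^(m+1) * llx := by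
          apply mul_le_mul_of_nonneg_right _ hllx
          exact pow_le_pow_left₀ (by positivity) (by exact_mod_cast hk8) _
    _ ≤ lx := hE1
    _ ≤ (2*(m+1)*3^(m+1)+1 : ℝ) * lx := le_mul_of_one_le_left hlx hC1
  · push_neg at hk8
    set t := k / 2 with ht
    have ht4 : 4 ≤ t := by omega
    have hk3t : k ≤ 3 * t := by omega
    set s' := n.primeFactors.filter (fun p => t < p) with hs'
    have hcard : t ≤ s'.card := by
      have := card_filter_gt n.primeFactors hprime t
      rw [← hk, ← hs'] at this
      omega
    have hu4 : (4:ℝ) ≤ (t:ℝ) := by exact_mod_cast ht4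
    have hlogu : 0 ≤ Real.log (t:ℝ) := Real.log_nonneg (by linarith)
    have hbound : ∀ p ∈ s', (t:ℝ)^m * Real.log (t:ℝ) ≤ (p:ℝ)^m * Real.log p := by
      intro p hp
      rw [hs', Finset.mem_filter] at hp
      have hup : (t:ℝ) ≤ (p:ℝ) := by exact_mod_cast hp.2.le
      exact mul_le_mul (pow_le_pow_left₀ (by linarith) hup _)
        (Real.log_le_log (by linarith) hup) hlogu (by positivity)
    have hsum' : (s'.card : ℝ) * ((t:ℝ)^m * Real.log (t:ℝ)) ≤ lx := by
      have h1 := Finset.card_nsmul_le_sum s' _ _ hbound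
      rw [nsmul_eq_mul] at h1
      refine le_trans h1 (le_trans ?_ hsum)
      apply Finset.sum_le_sum_of_subset_of_nonneg (Finset.filter_subset _ _)
      intro p hp _
      have := hprime p hp
      have h1p : (1:ℝ) ≤ (p:ℝ) := by exact_mod_cast by omega
      have := Real.log_nonneg h1p
      positivity
    have h3 : (t:ℝ)^(m+1) * Real.log (t:ℝ) ≤ lx := by
      have hcc : (t:ℝ) * ((t:ℝ)^m * Real.log (t:ℝ)) ≤ (s'.card : ℝ) * ((t:ℝ)^m * Real.log (t:ℝ)) := by
        apply mul_le_mul_of_nonneg_right (by exact_mod_cast hcard) (by positivity)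
      calc (t:ℝ)^(m+1) * Real.log (t:ℝ) = (t:ℝ) * ((t:ℝ)^m * Real.log (t:ℝ)) := by ring
        _ ≤ _ := le_trans hcc hsum'
    have hkk : (k:ℝ)^(m+1) ≤ 3^(m+1) * (t:ℝ)^(m+1) := by
      rw [← mul_pow]
      exact pow_le_pow_left₀ (by positivity) (by exact_mod_cast hk3t) _
    by_cases hcase : llx ≤ 2*(m+1)*Real.log (t:ℝ)
    · calc (k:ℝ)^(m+1) * llx ≤ 3^(m+1) * (t:ℝ)^(m+1) * (2*(m+1)*Real.log (t:ℝ)) := by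
            apply mul_le_mul hkk hcase hllx (by positivity)
      _ = 2*(m+1)*3^(m+1) * ((t:ℝ)^(m+1) * Real.log (t:ℝ)) := by ring
      _ ≤ 2*(m+1)*3^(m+1) * lx := by
            apply mul_le_mul_of_nonneg_left h3 (by positivity)
      _ ≤ (2*(m+1)*3^(m+1)+1 : ℝ) * lx := by nlinarith
    · push_neg at hcase
      have hup : (t:ℝ)^(m+1) ≤ Real.exp (llx/2) := by
        have hpos : 0 < (t:ℝ)^(m+1) := by positivity
        rw [← Real.exp_log hpos, Real.exp_le_exp, Real.log_pow]
        push_cast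
        nlinarith
      calc (k:ℝ)^(m+1) * llx ≤ 3^(m+1) * (t:ℝ)^(m+1) * llx := by
            apply mul_le_mul_of_nonneg_right hkk hllx
      _ ≤ 3^(m+1) * Real.exp (llx/2) * llx := by
            apply mul_le_mul_of_nonneg_right _ hllx
            apply mul_le_mul_of_nonneg_left hup (by positivity)
      _ = 3^(m+1) * (llx * Real.exp (llx/2)) := by ring
      _ ≤ 3^(m+1) * lx := mul_le_mul_of_nonneg_left hE2 (by positivity)
      _ ≤ (2*(m+1)*3^(m+1)+1 : ℝ) * lx := by nlinarith [pow_pos (by norm_num : (0:ℝ) < 3) (m+1), mul_nonneg hlx (pow_nonneg (by norm_num : (0:ℝ) ≤ 3) (m+1))]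


open Filter Real in
theorem stmt2 (m : ℕ) (hm : 0 < m) :
    ∃ C : ℝ, 0 < C ∧ ∃ x₀ : ℝ, ∀ x : ℝ, x₀ ≤ x →
      (Nat.card {n : ℕ | 2 ≤ n ∧ (n : ℝ) ≤ x ∧ fr (-(m : ℝ)) n = fr (-(m : ℝ)) (n + 1)} : ℝ)
        ≤ x ^ (C * (Real.log (Real.log x) / Real.log x) ^ ((m : ℝ) / ((m : ℝ) + 1))) := by
  classical
  set C₁ : ℝ := 2*(m+1)*3^(m+1)+1 with hC₁def
  have hC₁pos : (0:ℝ) < C₁ := by positivity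
  have hC₁ge1 : (1:ℝ) ≤ C₁ := by
    have h0 : (0:ℝ) ≤ 2*(m+1)*3^(m+1) := by positivity
    rw [hC₁def]; linarith
  refine ⟨4 * C₁, by positivity, ?_⟩
  -- eventual facts
  have hev : ∀ᶠ x : ℝ in atTop,
      Real.exp 3 ≤ x ∧ (8:ℝ)^(m+1) * Real.log (Real.log x) ≤ Real.log x ∧
      Real.log (Real.log x) ≤ (Real.log x) ^ ((1:ℝ)/2) := by
    have hll : (fun x:ℝ => Real.log (Real.log x)) =o[atTop] Real.log := by
      simpa [Function.comp_def] using
        (Real.isLittleO_log_id_atTop.comp_tendsto Real.tendsto_log_atTop)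
    have hll2 : (fun x:ℝ => Real.log (Real.log x)) =o[atTop]
        (fun x => (Real.log x) ^ ((1:ℝ)/2)) := by
      simpa [Function.comp_def] using
        ((isLittleO_log_rpow_atTop (by norm_num : (0:ℝ) < 1/2)).comp_tendsto
          Real.tendsto_log_atTop)
    have hc : (0:ℝ) < ((8:ℝ)^(m+1))⁻¹ := by positivity
    filter_upwards [eventually_ge_atTop (Real.exp 3), hll.def hc, hll2.def one_pos]
      with x h1 h2 h3
    have hlx : (3:ℝ) ≤ Real.log x := by
      calc (3:ℝ) = Real.log (Real.exp 3) := (Real.log_exp 3).symm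
      _ ≤ Real.log x := Real.log_le_log (Real.exp_pos 3) h1
    have hllx : (0:ℝ) ≤ Real.log (Real.log x) := by
      apply Real.log_nonneg; linarith
    refine ⟨h1, ?_, ?_⟩
    · rw [Real.norm_eq_abs, Real.norm_eq_abs, abs_of_nonneg hllx,
        abs_of_nonneg (by linarith : (0:ℝ) ≤ Real.log x)] at h2
      calc (8:ℝ)^(m+1) * Real.log (Real.log x)
          ≤ (8:ℝ)^(m+1) * (((8:ℝ)^(m+1))⁻¹ * Real.log x) := by
            apply mul_le_mul_of_nonneg_left h2 (by positivity)
      _ = Real.log x := by field_simp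
    · rw [Real.norm_eq_abs, Real.norm_eq_abs, abs_of_nonneg hllx,
        abs_of_nonneg (by positivity : (0:ℝ) ≤ (Real.log x) ^ ((1:ℝ)/2))] at h3
      linarith
  obtain ⟨x₀, hx₀⟩ := eventually_atTop.mp hev
  refine ⟨x₀, fun x hx => ?_⟩
  obtain ⟨hxe3, hE1, hE2'⟩ := hx₀ x hx
  -- basic positivity facts
  set lx := Real.log x with hlxdef
  set llx := Real.log lx with hllxdef
  have hxpos : (0:ℝ) < x := lt_of_lt_of_le (Real.exp_pos 3) hxe3
  have hx1 : (1:ℝ) ≤ x := le_trans (by nlinarith [Real.exp_pos 3, Real.add_one_le_exp (3:ℝ)]) hxe3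
  have hlx3 : (3:ℝ) ≤ lx := by
    calc (3:ℝ) = Real.log (Real.exp 3) := (Real.log_exp 3).symm
    _ ≤ lx := Real.log_le_log (Real.exp_pos 3) hxe3
  have hlxpos : (0:ℝ) < lx := by linarith
  have hllx1 : (1:ℝ) ≤ llx := by
    calc (1:ℝ) = Real.log (Real.exp 1) := (Real.log_exp 1).symm
    _ ≤ llx := Real.log_le_log (Real.exp_pos 1)
        (le_trans (le_trans Real.exp_one_lt_d9.le (by norm_num)) hlx3)
  have hllxpos : (0:ℝ) < llx := by linarith
  have hE2 : llx * Real.exp (llx / 2) ≤ lx := by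
    have hexp : Real.exp (llx / 2) = lx ^ ((1:ℝ)/2) := by
      rw [Real.rpow_def_of_pos hlxpos]
      ring_nf
      rw [hllxdef]
    rw [hexp]
    calc llx * lx ^ ((1:ℝ)/2) ≤ lx ^ ((1:ℝ)/2) * lx ^ ((1:ℝ)/2) := by
          apply mul_le_mul_of_nonneg_right hE2' (by positivity)
    _ = lx := by
          rw [← Real.rpow_add hlxpos]
          norm_num
  -- parameters
  set β : ℝ := 1 / ((m:ℝ) + 1) with hβdef
  set γ : ℝ := (m:ℝ) / ((m:ℝ) + 1) with hγdef
  have hm1 : ((m:ℝ) + 1) ≠ 0 := by positivity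
  have hβpos : 0 < β := by rw [hβdef]; positivity
  have hβle1 : β ≤ 1 := by
    rw [hβdef, div_le_one (by positivity)]
    simp
  have hγβ : (1:ℝ) - β = γ := by
    rw [hβdef, hγdef]; field_simp; ring
  set X := ⌊x⌋₊ with hXdef
  set L := ⌊Real.logb 2 x⌋₊ with hLdef
  set K := ⌊(C₁ * lx / llx) ^ β⌋₊ with hKdef
  set T : Finset ℕ := (Finset.Icc 2 X).filter
    (fun n => ∀ p ∈ n.primeFactors, p ^ m ∣ n.factorization p) with hTdef
  -- bound on exponents / primes for members of T
  have hlog2pos : (0:ℝ) < Real.log 2 := Real.log_pos (by norm_num)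
  have hpow_le : ∀ a : ℕ, (2:ℕ) ^ a ≤ X → a ≤ L := by
    intro a ha
    have h2 : ((2:ℝ)) ^ a ≤ x := by
      have hX : ((2^a : ℕ):ℝ) ≤ (X:ℝ) := by exact_mod_cast ha
      calc ((2:ℝ))^a = ((2^a : ℕ):ℝ) := by push_cast; ring
      _ ≤ (X:ℝ) := hX
      _ ≤ x := Nat.floor_le (le_of_lt hxpos)
    have h3 : (a : ℝ) * Real.log 2 ≤ lx := by
      rw [hlxdef]
      calc (a : ℝ) * Real.log 2 = Real.log ((2:ℝ) ^ a) := by rw [Real.log_pow]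
      _ ≤ Real.log x := Real.log_le_log (by positivity) h2
    rw [hLdef]
    apply Nat.le_floor
    rw [Real.logb, le_div_iff₀ hlog2pos]
    exact h3
  -- membership facts for T
  have hTfacts : ∀ n ∈ T, n ≠ 0 ∧ n.primeFactors.card ≤ K ∧
      ∀ p ∈ n.primeFactors, p ≤ L ∧ n.factorization p ≤ L := by
    intro n hn
    rw [hTdef, Finset.mem_filter, Finset.mem_Icc] at hn
    obtain ⟨⟨hn2, hnX⟩, hdvd⟩ := hn
    have hn0 : n ≠ 0 := by omega
    have hfacts : ∀ p ∈ n.primeFactors, p ≤ L ∧ n.factorization p ≤ L := by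
      intro p hp
      have hpp := Nat.prime_of_mem_primeFactors hp
      have hadvd : p ^ n.factorization p ∣ n := Nat.ordProj_dvd n p
      have hapos : 0 < n.factorization p := hpp.factorization_pos_of_dvd hn0
        (Nat.dvd_of_mem_primeFactors hp)
      have hmle : p ^ m ≤ n.factorization p := Nat.le_of_dvd hapos (hdvd p hp)
      constructor
      · apply le_trans (Nat.le_self_pow hm.ne' p)
        apply hpow_le
        calc (2:ℕ) ^ p ^ m ≤ p ^ p ^ m := Nat.pow_le_pow_left hpp.two_le _
        _ ≤ p ^ n.factorization p := Nat.pow_le_pow_right hpp.pos hmle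
        _ ≤ n := Nat.le_of_dvd (by omega) hadvd
        _ ≤ X := hnX
      · apply hpow_le
        calc (2:ℕ) ^ n.factorization p ≤ p ^ n.factorization p :=
              Nat.pow_le_pow_left hpp.two_le _
        _ ≤ n := Nat.le_of_dvd (by omega) hadvd
        _ ≤ X := hnX
    refine ⟨hn0, ?_, hfacts⟩
    -- the ω bound
    have hsum : ∑ p ∈ n.primeFactors, (p:ℝ)^m * Real.log p ≤ lx := by
      refine le_trans (sum_le_log m n hn0 hdvd) ?_
      rw [hlxdef]
      apply Real.log_le_log (by exact_mod_cast by omega)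
      calc (n:ℝ) ≤ (X:ℝ) := by exact_mod_cast hnX
      _ ≤ x := Nat.floor_le (le_of_lt hxpos)
    have hω := omega_bound m lx llx (le_of_lt hlxpos) (le_of_lt hllxpos) hE1 hE2 n
      (fun p hp => (Nat.prime_of_mem_primeFactors hp).two_le) hsum
    rw [← hC₁def] at hω
    have hωr : ((n.primeFactors.card : ℝ)) ^ (m+1) ≤ C₁ * lx / llx := by
      rw [le_div_iff₀ hllxpos]
      exact hω
    rw [hKdef]
    apply Nat.le_floor
    have hcast : ((n.primeFactors.card : ℝ)) = (((n.primeFactors.card : ℝ)) ^ (m+1)) ^ β := by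
      rw [← Real.rpow_natCast ((n.primeFactors.card : ℝ)) (m+1), ← Real.rpow_mul (by positivity),
        hβdef]
      push_cast
      rw [mul_one_div, div_self hm1, Real.rpow_one]
    rw [hcast]
    exact Real.rpow_le_rpow (pow_nonneg (Nat.cast_nonneg _) _) hωr (le_of_lt hβpos)
  -- the set is contained in T
  have hsub : {n : ℕ | 2 ≤ n ∧ (n : ℝ) ≤ x ∧ fr (-(m : ℝ)) n = fr (-(m : ℝ)) (n + 1)} ⊆ ↑T := by
    intro n hn
    obtain ⟨hn2, hnx, hfr⟩ := hn
    rw [hTdef]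
    simp only [Finset.coe_filter, Finset.mem_Icc, Set.mem_setOf_eq]
    refine ⟨⟨hn2, Nat.le_floor hnx⟩, ?_⟩
    apply key_dvd
    have := hfr
    rw [fr_eq_g, fr_eq_g] at this
    exact_mod_cast this
  have hcard1 : (Nat.card {n : ℕ | 2 ≤ n ∧ (n : ℝ) ≤ x ∧
      fr (-(m : ℝ)) n = fr (-(m : ℝ)) (n + 1)} : ℝ) ≤ (T.card : ℝ) := by
    have h1 := Nat.card_mono T.finite_toSet hsub
    simp only [Nat.card_coe_set_eq, Set.ncard_coe_finset] at h1
    exact_mod_cast h1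
  have hL1 : 1 ≤ L := by
    rw [hLdef]
    apply Nat.le_floor
    rw [Real.logb, Nat.cast_one, le_div_iff₀ hlog2pos, one_mul]
    nlinarith [Real.log_two_lt_d9, hlx3]
  have hcard2 := card_bound L K hL1 T hTfacts
  -- bound (L+1) by exp (2 llx)
  have hLexp : ((L:ℝ) + 1) ≤ Real.exp (2 * llx) := by
    have h1 : (L:ℝ) ≤ Real.logb 2 x := Nat.floor_le (by
      rw [Real.logb]; positivity)
    have h2 : Real.logb 2 x ≤ 2 * lx := by
      rw [Real.logb, div_le_iff₀ hlog2pos]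
      nlinarith [Real.log_two_gt_d9, hlxpos]
    have h3 : Real.exp (2 * llx) = lx ^ 2 := by
      rw [two_mul, Real.exp_add, Real.exp_log hlxpos, sq]
    rw [h3]
    nlinarith
  have hKle : (K:ℝ) ≤ (C₁ * lx / llx) ^ β := Nat.floor_le (by positivity)
  -- algebraic identities
  have hlxβ : lx / lx ^ γ = lx ^ β := by
    have h1γ : β = (1:ℝ) - γ := by rw [hβdef, hγdef]; field_simp; ring
    rw [h1γ, Real.rpow_sub hlxpos, Real.rpow_one]
  have idL : (C₁ * lx / llx) ^ β * llx = C₁ ^ β * (lx ^ β * llx ^ γ) := by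
    have h2 : (C₁ * lx / llx) ^ β = C₁ ^ β * lx ^ β / llx ^ β := by
      rw [Real.div_rpow (by positivity) hllxpos.le, Real.mul_rpow hC₁pos.le hlxpos.le]
    have h3 : llx / llx ^ β = llx ^ γ := by
      rw [← hγβ, Real.rpow_sub hllxpos, Real.rpow_one]
    rw [h2, ← h3]; ring
  have idR : lx * (4 * C₁ * (llx / lx) ^ γ) = 4 * C₁ * (lx ^ β * llx ^ γ) := by
    have hdiv : (llx / lx) ^ γ = llx ^ γ / lx ^ γ := Real.div_rpow hllxpos.le hlxpos.le γ
    rw [hdiv, ← hlxβ]; ring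
  have hC₁β : C₁ ^ β ≤ C₁ := by
    calc C₁ ^ β ≤ C₁ ^ (1:ℝ) := Real.rpow_le_rpow_of_exponent_le hC₁ge1 hβle1
    _ = C₁ := Real.rpow_one _
  have hexpo : 4 * ((C₁ * lx / llx) ^ β) * llx ≤ lx * (4 * C₁ * (llx / lx) ^ γ) := by
    rw [idR]
    have e1 : 4 * ((C₁ * lx / llx) ^ β) * llx = 4 * (C₁ ^ β * (lx ^ β * llx ^ γ)) := by
      rw [mul_assoc, idL]
    rw [e1]
    have hA : (0:ℝ) ≤ lx ^ β * llx ^ γ := by positivity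
    have h6 := mul_le_mul_of_nonneg_right hC₁β hA
    linarith
  calc (Nat.card {n : ℕ | 2 ≤ n ∧ (n : ℝ) ≤ x ∧ fr (-(m : ℝ)) n = fr (-(m : ℝ)) (n + 1)} : ℝ)
      ≤ (T.card : ℝ) := hcard1
  _ ≤ ((((L+1)^2)^K : ℕ) : ℝ) := by exact_mod_cast hcard2
  _ = (((L:ℝ)+1)^2)^K := by push_cast; ring
  _ ≤ (Real.exp (2*llx)^2)^K := by
      apply pow_le_pow_left₀ (by positivity)
      apply pow_le_pow_left₀ (by positivity) hLexp
  _ = Real.exp (((2*K : ℕ):ℝ) * (2*llx)) := by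
      rw [← pow_mul, Real.exp_nat_mul]
  _ ≤ Real.exp (lx * (4 * C₁ * (llx / lx) ^ γ)) := by
      rw [Real.exp_le_exp]
      refine le_trans ?_ hexpo
      have h5 : (K:ℝ) * llx ≤ (C₁ * lx / llx) ^ β * llx :=
        mul_le_mul_of_nonneg_right hKle hllxpos.le
      push_cast
      linarith
  _ = x ^ (4 * C₁ * (llx / lx) ^ γ) := (Real.rpow_def_of_pos hxpos _).symm
end

section
/- Let r be a rational number that is not an integer. Then for every integer n ≥ 2, f_r(n) ≠ f_r(n+1); that is, there are no r-th power Ruth–Aaron numbers for non-integer rational r. -/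
open Polynomial

-- step 1: norm key
theorem norm_key {v : ℕ} (hv : v ≠ 0) {a : ℚ} (ha : a ≠ 0) {g : ℚ[X]} (hg : Irreducible g)
    (hg' : g ∣ X ^ v - C a) :
    ∃ N : ℚ, N ^ v = a ^ g.natDegree := by
  have : Fact (Irreducible g) := ⟨hg⟩
  refine ⟨Algebra.norm ℚ (AdjoinRoot.root g), ?_⟩
  have := Polynomial.eval₂_eq_zero_of_dvd_of_eval₂_eq_zero _ _ hg' (AdjoinRoot.eval₂_root g)
  rw [eval₂_sub, eval₂_pow, eval₂_C, eval₂_X, sub_eq_zero] at this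
  rw [← map_pow, this, ← AdjoinRoot.algebraMap_eq]
  erw [Algebra.norm_algebraMap]
  congr 1
  exact (AdjoinRoot.powerBasis hg.ne_zero).finrank

theorem pos_pow_eq_pow_of_pow_eq {a N : ℚ} (ha : 0 < a) (hN : N ≠ 0) {d v : ℕ}
    (hd : d ≠ 0) (hvd : v ≠ 0) (h : N ^ v = a ^ d) :
    ∃ b : ℚ, b ^ (v / Nat.gcd d v) = a := by
  set g0 := Nat.gcd d v with hg0
  have hg0pos : 0 < g0 := Nat.gcd_pos_of_pos_left _ (Nat.pos_of_ne_zero hd)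
  set d' := d / g0
  set v' := v / g0
  have hd'v' : Nat.Coprime d' v' := Nat.coprime_div_gcd_div_gcd hg0pos
  have hdd : d = g0 * d' := (Nat.mul_div_cancel' (Nat.gcd_dvd_left d v)).symm
  have hvv : v = g0 * v' := (Nat.mul_div_cancel' (Nat.gcd_dvd_right d v)).symm
  have habs : |N| ^ v = a ^ d := by
    rw [← abs_pow, h, abs_of_pos (pow_pos ha d)]
  have hNabs : (0:ℚ) < |N| := abs_pos.mpr hN
  -- a ^ d' = |N| ^ v'
  have hkey : a ^ d' = |N| ^ v' := by
    have : (a ^ d') ^ g0 = (|N| ^ v') ^ g0 := by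
      rw [← pow_mul, ← pow_mul, mul_comm d' g0, mul_comm v' g0, ← hdd, ← hvv, habs]
    exact (pow_left_inj₀ (pow_nonneg (le_of_lt ha) _) (le_of_lt (pow_pos hNabs v')) hg0pos.ne').mp this
  -- Bezout
  obtain ⟨x, y, hxy⟩ : ∃ x y : ℤ, d' * x + v' * y = 1 := by
    refine ⟨Nat.gcdA d' v', Nat.gcdB d' v', ?_⟩
    have := Nat.gcd_eq_gcd_ab d' v'
    rw [hd'v'] at this
    push_cast at this
    linarith
  refine ⟨|N| ^ x * a ^ y, ?_⟩
  have ha' : a ≠ 0 := ha.ne'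
  have hN' : |N| ≠ 0 := hNabs.ne'
  rw [mul_pow, ← zpow_natCast (|N| ^ x), ← zpow_natCast (a ^ y), ← zpow_mul, ← zpow_mul]
  have h1 : |N| ^ (x * (v':ℤ)) = a ^ ((d':ℤ) * x) := by
    rw [mul_comm x, zpow_mul, zpow_mul, zpow_natCast, zpow_natCast, hkey]
  rw [h1, ← zpow_add₀ ha', ]
  rw [show (d':ℤ) * x + y * (v':ℤ) = 1 by linarith, zpow_one]

theorem my_irred {v : ℕ} (hv : v ≠ 0) {a : ℚ} (ha : 0 < a)
    (h : ∀ ℓ : ℕ, ℓ.Prime → ℓ ∣ v → ∀ b : ℚ, b ^ ℓ ≠ a) :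
    Irreducible (X ^ v - C a) := by
  have hvpos : 0 < v := Nat.pos_of_ne_zero hv
  have hne : (X ^ v - C a : ℚ[X]) ≠ 0 := X_pow_sub_C_ne_zero hvpos a
  have hnu : ¬ IsUnit (X ^ v - C a : ℚ[X]) := by
    rw [Polynomial.isUnit_iff_degree_eq_zero, degree_X_pow_sub_C hvpos, Nat.cast_eq_zero]
    exact hv
  obtain ⟨g, hg, hg'⟩ := WfDvdMonoid.exists_irreducible_factor hnu hne
  suffices hdeg : g.natDegree = v by
    exact (associated_of_dvd_of_natDegree_le hg' hne
      (hdeg.trans natDegree_X_pow_sub_C.symm).ge).irreducible hg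
  by_contra hdv
  have hdle : g.natDegree ≤ v := (natDegree_le_of_dvd hg' hne).trans_eq natDegree_X_pow_sub_C
  have hdpos : g.natDegree ≠ 0 := fun h0 => by
    have := Polynomial.natDegree_pos_iff_degree_pos.mpr (Polynomial.degree_pos_of_irreducible hg)
    omega
  obtain ⟨N, hN⟩ := norm_key hv ha.ne' hg hg'
  have hN0 : N ≠ 0 := by
    intro h0
    rw [h0, zero_pow hv] at hN
    exact (pow_pos ha g.natDegree).ne' hN.symm
  obtain ⟨b, hb⟩ := pos_pow_eq_pow_of_pow_eq ha hN0 hdpos hv hN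
  set v' := v / Nat.gcd g.natDegree v with hv'
  have hv'dvd : v' ∣ v := Nat.div_dvd_of_dvd (Nat.gcd_dvd_right _ _)
  have hv'ne1 : v' ≠ 1 := by
    intro h1
    apply hdv
    have hg0 : Nat.gcd g.natDegree v = v := by
      have hg0pos : 0 < Nat.gcd g.natDegree v := Nat.gcd_pos_of_pos_left _ (Nat.pos_of_ne_zero hdpos)
      have := Nat.div_mul_cancel (Nat.gcd_dvd_right g.natDegree v)
      rw [← hv', h1, one_mul] at this
      exact this
    have : v ∣ g.natDegree := hg0 ▸ Nat.gcd_dvd_left _ _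
    have := Nat.le_of_dvd (Nat.pos_of_ne_zero hdpos) this
    omega
  have hv'0 : v' ≠ 0 := by
    intro h0
    rw [h0] at hv'dvd
    exact hv (Nat.eq_zero_of_zero_dvd hv'dvd)
  obtain ⟨ℓ, hℓp, hℓdvd⟩ := Nat.exists_prime_and_dvd hv'ne1
  exact h ℓ hℓp (hℓdvd.trans hv'dvd) (b ^ (v' / ℓ)) (by
    rw [← pow_mul, Nat.div_mul_cancel hℓdvd, hb])

open IntermediateField in
theorem trace_eq_zero_of_nextCoeff {k K : Type*} [Field k] [Field K] [Algebra k K]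
    [FiniteDimensional k K]
    (α : K) (h : (minpoly k α).nextCoeff = 0) : Algebra.trace k K α = 0 := by
  have hint : IsIntegral k α := IsIntegral.of_finite k α
  set F := k⟮α⟯
  haveI : FiniteDimensional k F := FiniteDimensional.left k F K
  haveI : FiniteDimensional F K := FiniteDimensional.right k F K
  have hα : α = algebraMap F K (AdjoinSimple.gen k α) := (AdjoinSimple.algebraMap_gen k α).symm
  rw [← Algebra.trace_trace (S := F), hα, Algebra.trace_algebraMap, map_nsmul]
  have : Algebra.trace k F (AdjoinSimple.gen k α) = 0 := by
    have hgen : (adjoin.powerBasis hint).gen = AdjoinSimple.gen k α := adjoin.powerBasis_gen hint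
    rw [← hgen, PowerBasis.trace_gen_eq_nextCoeff_minpoly, hgen, minpoly_gen, h, neg_zero]
  rw [this, smul_zero]

theorem stmt3 (r : ℚ) (hr : ¬∃ z : ℤ, (z : ℚ) = r) :
    ∀ n : ℕ, 2 ≤ n → fr (r : ℝ) n ≠ fr (r : ℝ) (n + 1) := by
  classical
  intro n hn heq
  set v := r.den with hv
  set u := r.num with hu
  have hv0 : v ≠ 0 := r.den_nz
  have hv1 : v ≠ 1 := fun h => hr ⟨u, Rat.coe_int_num_of_den_eq_one h⟩
  have hv2 : 2 ≤ v := by omega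
  have hu0 : u ≠ 0 := fun h => hr ⟨0, by rw [Int.cast_zero, (Rat.num_eq_zero).mp h]⟩
  have hco : Nat.Coprime u.natAbs v := r.reduced
  have hrv : (r : ℝ) * (v : ℝ) = (u : ℝ) := by
    rw [Rat.cast_def, ← hu, ← hv, div_mul_cancel₀]
    exact_mod_cast hv0
  set P := n.minFac with hP'
  have hP : P.Prime := Nat.minFac_prime (by omega)
  haveI : Fact P.Prime := ⟨hP⟩
  have hPdvd : P ∣ n := n.minFac_dvd
  set F1 := n.primeFactors with hF1
  set F2 := (n + 1).primeFactors with hF2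
  have hPF1 : P ∈ F1 := Nat.mem_primeFactors.mpr ⟨hP, hPdvd, by omega⟩
  have hPF2 : P ∉ F2 := by
    intro h
    obtain ⟨-, hdvd, -⟩ := Nat.mem_primeFactors.mp h
    have h1 : P ∣ 1 := (Nat.dvd_add_right hPdvd).mp hdvd
    exact hP.one_lt.ne' (Nat.dvd_one.mp h1)
  set U := F1 ∪ F2 with hU
  -- basic facts about elements of U
  have hUprime : ∀ p ∈ U, p.Prime := by
    intro p hp
    rcases Finset.mem_union.mp hp with h | h
    · exact Nat.prime_of_mem_primeFactors h
    · exact Nat.prime_of_mem_primeFactors h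
  -- γ p ^ v = (c p : ℝ)
  have hγv : ∀ m : ℕ, m ≠ 0 → ((m : ℝ) ^ (r : ℝ)) ^ v = ((((m : ℚ) ^ u : ℚ)) : ℝ) := by
    intro m hm
    rw [← Real.rpow_natCast ((m : ℝ) ^ (r : ℝ)) v, ← Real.rpow_mul (Nat.cast_nonneg m), hrv,
      Real.rpow_intCast]
    push_cast
    ring
  -- irreducibility of X^v - C ((m:ℚ)^u) when padicValNat P m = v-1
  have hzval : ∀ q : ℚ, q ≠ 0 → ∀ j : ℤ, padicValRat P (q ^ j) = j * padicValRat P q := by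
    intro q hq j
    obtain ⟨a, rfl | rfl⟩ := j.eq_nat_or_neg
    · rw [zpow_natCast, padicValRat.pow q]
    · rw [zpow_neg, zpow_natCast, padicValRat.inv, padicValRat.pow q]
      push_cast
      try ring
  have hirr : ∀ m : ℕ, m ≠ 0 → padicValNat P m = v - 1 →
      Irreducible (X ^ v - C ((m : ℚ) ^ u)) := by
    intro m hm hval
    have hmq : ((m : ℚ)) ≠ 0 := by exact_mod_cast hm
    have hmqpos : (0 : ℚ) < m := by positivity
    apply my_irred hv0 (zpow_pos hmqpos u)
    intro ℓ hℓ hℓv b hb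
    have hcne : (m : ℚ) ^ u ≠ 0 := zpow_ne_zero u hmq
    have hb0 : b ≠ 0 := fun h => hcne (by rw [← hb, h, zero_pow hℓ.ne_zero])
    have hvalc : padicValRat P ((m : ℚ) ^ u) = u * (v - 1 : ℕ) := by
      rw [hzval _ hmq u, padicValRat.of_nat, hval]
    have hvalb : padicValRat P (b ^ ℓ) = ℓ * padicValRat P b := padicValRat.pow b
    have hdvd : (ℓ : ℤ) ∣ u * ((v - 1 : ℕ) : ℤ) := by
      refine ⟨padicValRat P b, ?_⟩
      rw [← hvalc, ← hb, hvalb]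
    rcases (Nat.prime_iff_prime_int.mp hℓ).dvd_mul.mp hdvd with h | h
    · have : ℓ ∣ u.natAbs := by
        have := Int.natAbs_dvd_natAbs.mpr h
        simpa using this
      have h1 : ℓ ∣ 1 := hco ▸ Nat.dvd_gcd this hℓv
      exact hℓ.one_lt.ne' (Nat.dvd_one.mp h1)
    · have hh : ℓ ∣ v - 1 := Int.ofNat_dvd.mp (by exact_mod_cast h)
      have h1 : ℓ ∣ 1 := by
        have := Nat.dvd_sub hℓv hh
        rwa [show v - (v - 1) = 1 by omega] at this
      exact hℓ.one_lt.ne' (Nat.dvd_one.mp h1)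
  -- nonzero-ness of m p
  have hmne : ∀ p : ℕ, p.Prime → (p * P ^ (v - 1) : ℕ) ≠ 0 := by
    intro p hp
    have := hp.pos
    have := hP.pos
    positivity
  -- integrality
  have hint : ∀ p : ℕ, p.Prime → IsIntegral ℚ (((p * P ^ (v - 1) : ℕ) : ℝ) ^ (r : ℝ)) := by
    intro p hp
    refine ⟨X ^ v - C ((((p * P ^ (v - 1) : ℕ) : ℚ)) ^ u), monic_X_pow_sub_C _ hv0, ?_⟩
    have h0 := hγv _ (hmne p hp)
    simp only [eval₂_sub, eval₂_X_pow, eval₂_C, eq_ratCast]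
    rw [h0, sub_self]
  set T : Finset ℝ := U.image (fun p => ((p * P ^ (v - 1) : ℕ) : ℝ) ^ (r : ℝ)) with hT
  set K := IntermediateField.adjoin ℚ (T : Set ℝ) with hK
  haveI : FiniteDimensional ℚ K := IntermediateField.finiteDimensional_adjoin (by
    intro x hx
    obtain ⟨p, hp, rfl⟩ := Finset.mem_image.mp (Finset.mem_coe.mp hx)
    exact hint p (hUprime p hp))
  have hmemK : ∀ p ∈ U, ((p * P ^ (v - 1) : ℕ) : ℝ) ^ (r : ℝ) ∈ K :=
    fun p hp => IntermediateField.subset_adjoin ℚ _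
      (Finset.mem_coe.mpr (Finset.mem_image_of_mem _ hp))
  set γK : ℕ → K := fun p => if h : p ∈ U then ⟨_, hmemK p h⟩ else 0 with hγK
  have hγKcoe : ∀ p ∈ U, algebraMap K ℝ (γK p) = ((p * P ^ (v - 1) : ℕ) : ℝ) ^ (r : ℝ) := by
    intro p hp
    rw [hγK]
    simp only [dif_pos hp]
    rfl
  -- the multiplied equation
  have hmul : ∀ p : ℕ, ((p * P ^ (v - 1) : ℕ) : ℝ) ^ (r : ℝ)
      = (p : ℝ) ^ (r : ℝ) * ((P ^ (v - 1) : ℕ) : ℝ) ^ (r : ℝ) := by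
    intro p
    push_cast
    rw [← Real.mul_rpow (by positivity) (by positivity)]
  have heq2 : ∑ p ∈ F1, (n.factorization p : ℝ) * (((p * P ^ (v - 1) : ℕ) : ℝ) ^ (r : ℝ))
      = ∑ q ∈ F2, ((n + 1).factorization q : ℝ) * (((q * P ^ (v - 1) : ℕ) : ℝ) ^ (r : ℝ)) := by
    have h := congrArg (fun x : ℝ => x * (((P ^ (v - 1) : ℕ) : ℝ) ^ (r : ℝ))) heq
    simp only [fr, Finset.sum_mul, mul_assoc] at h
    simp only [hmul, mul_assoc]
    exact h
  have heqK : (∑ p ∈ F1, (n.factorization p) • γK p)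
      = ∑ q ∈ F2, ((n + 1).factorization q) • γK q := by
    apply (algebraMap K ℝ).injective
    rw [map_sum, map_sum]
    have e1 : ∀ p ∈ F1, algebraMap K ℝ ((n.factorization p) • γK p)
        = (n.factorization p : ℝ) * (((p * P ^ (v - 1) : ℕ) : ℝ) ^ (r : ℝ)) := by
      intro p hp
      rw [map_nsmul, hγKcoe p (Finset.mem_union_left _ hp), nsmul_eq_mul]
    have e2 : ∀ q ∈ F2, algebraMap K ℝ (((n + 1).factorization q) • γK q)
        = ((n + 1).factorization q : ℝ) * (((q * P ^ (v - 1) : ℕ) : ℝ) ^ (r : ℝ)) := by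
      intro q hq
      rw [map_nsmul, hγKcoe q (Finset.mem_union_right _ hq), nsmul_eq_mul]
    rw [Finset.sum_congr rfl e1, Finset.sum_congr rfl e2]
    exact heq2
  -- next coefficient of binomials vanishes
  have hnext : ∀ c : ℚ, (X ^ v - C c : ℚ[X]).nextCoeff = 0 := by
    intro c
    rw [nextCoeff_of_natDegree_pos (by rw [natDegree_X_pow_sub_C]; omega), natDegree_X_pow_sub_C,
      coeff_sub, coeff_X_pow, coeff_C, if_neg (by omega), if_neg (by omega), sub_zero]
  -- traces of the irrational generators vanish
  have htr0 : ∀ p ∈ U, p ≠ P → Algebra.trace ℚ K (γK p) = 0 := by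
    intro p hpU hpP
    have hp : p.Prime := hUprime p hpU
    have hmne' : (p * P ^ (v - 1) : ℕ) ≠ 0 := hmne p hp
    have hvalm : padicValNat P (p * P ^ (v - 1)) = v - 1 := by
      rw [padicValNat.mul hp.ne_zero (pow_ne_zero _ hP.ne_zero), padicValNat.prime_pow,
        padicValNat.eq_zero_of_not_dvd, zero_add]
      rw [Nat.prime_dvd_prime_iff_eq hP hp]
      exact fun h => hpP h.symm
    apply trace_eq_zero_of_nextCoeff
    have hmin : minpoly ℚ (γK p) = X ^ v - C (((p * P ^ (v - 1) : ℕ) : ℚ) ^ u) := by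
      have hmap := minpoly.algebraMap_eq (A := ℚ) (B' := ℝ) (algebraMap K ℝ).injective (γK p)
      rw [← hmap, hγKcoe p hpU]
      refine (minpoly.eq_of_irreducible_of_monic (A := ℚ) (B := ℝ) (hirr _ hmne' hvalm) ?_ (monic_X_pow_sub_C _ hv0)).symm
      simp only [map_sub, map_pow, aeval_X, aeval_C, eq_ratCast]
      rw [hγv _ hmne', sub_self]
    rw [hmin, hnext]
  -- the P-term is rational
  have hPU : P ∈ U := Finset.mem_union_left _ hPF1
  have hγP : γK P = algebraMap ℚ K ((P : ℚ) ^ u) := by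
    apply (algebraMap K ℝ).injective
    rw [hγKcoe P hPU, ← IsScalarTower.algebraMap_apply ℚ K ℝ, eq_ratCast]
    have hm : (P * P ^ (v - 1) : ℕ) = P ^ v := by
      rw [← pow_succ']
      congr 1
      omega
    rw [hm]
    push_cast
    rw [← Real.rpow_natCast (P : ℝ) v, ← Real.rpow_mul (Nat.cast_nonneg P),
      mul_comm ((v : ℕ) : ℝ) (r : ℝ), hrv, Real.rpow_intCast]
  -- apply the trace
  have htr := congrArg (Algebra.trace ℚ K) heqK
  rw [map_sum, map_sum] at htr
  simp only [map_nsmul] at htr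
  rw [← Finset.add_sum_erase _ _ hPF1] at htr
  rw [Finset.sum_eq_zero (fun p hp => by
    obtain ⟨hne, hmem⟩ := Finset.mem_erase.mp hp
    rw [htr0 p (Finset.mem_union_left _ hmem) hne, smul_zero]), add_zero] at htr
  rw [Finset.sum_eq_zero (fun q hq => by
    have hne : q ≠ P := fun h => hPF2 (h ▸ hq)
    rw [htr0 q (Finset.mem_union_right _ hq) hne, smul_zero])] at htr
  rw [hγP, Algebra.trace_algebraMap, smul_smul] at htr
  have hPfac : n.factorization P ≠ 0 := by
    rw [← Finsupp.mem_support_iff, Nat.support_factorization]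
    exact hPF1
  have hfin : Module.finrank ℚ K ≠ 0 := Module.finrank_pos.ne'
  have hPq : ((P : ℚ)) ^ u ≠ 0 := zpow_ne_zero u (by exact_mod_cast hP.ne_zero)
  rw [nsmul_eq_mul] at htr
  exact mul_ne_zero (by exact_mod_cast Nat.mul_ne_zero hPfac hfin) hPq htr
end

section
/- The set of real numbers r > 0 for which there exists an integer n ≥ 2 with f_r(n) = f_r(n+1) is infinite. -/
/-!
For a prime `k ≥ 5` write `2 ^ k + 1 = 3 * M`. Every prime factor `p` of `M` satisfies
`p ≡ 1 [MOD k]`, because `-2` has order `k` modulo `p`; in particular `p > k`.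
The function `g r = f_r(2 ^ k) - f_r(2 ^ k + 1)` is continuous, positive at `r = 0`
(where `f_0 = Ω` and `Ω M ≤ log₂ M < k - 1`) and negative at `r = 2` (where a single
prime factor `p > k` of `M` outweighs `f_2(2 ^ k) = 4k`), so it vanishes at some `ρ_k > 0`.

Conversely, for fixed `r > 0`, using `(r/2) log p ≤ p ^ (r/2)` and `p > k`, we get
`f_r(M) ≥ (r/2) k ^ (r/2) log M ≈ (r/2) k ^ (1 + r/2) log 2`, which exceeds
`f_r(2 ^ k) = k 2 ^ r` once `k` is large. So each `r` equals `ρ_k` for only finitely many `k`,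
and the `ρ_k` form an infinite set.
-/

open Filter ArithmeticFunction
open scoped ArithmeticFunction.Omega

lemma fr_eq_factorization_sum (r : ℝ) (n : ℕ) :
    fr r n = n.factorization.sum fun p e => (e : ℝ) * (p : ℝ) ^ r := by
  rw [fr, Finsupp.sum, Nat.support_factorization]

lemma fr_mul (r : ℝ) {a b : ℕ} (ha : a ≠ 0) (hb : b ≠ 0) :
    fr r (a * b) = fr r a + fr r b := by
  simp only [fr_eq_factorization_sum, Nat.factorization_mul ha hb]
  exact Finsupp.sum_add_index' (by simp) (fun _ _ _ => by push_cast; ring)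

lemma fr_prime_pow (r : ℝ) {p : ℕ} (hp : p.Prime) (k : ℕ) :
    fr r (p ^ k) = k * (p : ℝ) ^ r := by
  rw [fr_eq_factorization_sum, hp.factorization_pow, Finsupp.sum_single_index (by simp)]

lemma fr_zero_eq_cardFactors (n : ℕ) : fr 0 n = Ω n := by
  simp [fr_eq_factorization_sum, cardFactors_eq_sum_factorization, Finsupp.sum]

lemma fr_prime_mul (r : ℝ) {p n : ℕ} (hp : p.Prime) (hn : n ≠ 0) :
    fr r (p * n) = (p : ℝ) ^ r + fr r n := by
  rw [fr_mul r hp.ne_zero hn, ← pow_one p, fr_prime_pow r hp, Nat.cast_one, one_mul, pow_one]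

lemma continuous_fr (n : ℕ) : Continuous fun r => fr r n :=
  continuous_finsetSum _ fun _ hp =>
    continuous_const.mul <|
      Real.continuous_const_rpow (mod_cast (Nat.prime_of_mem_primeFactors hp).ne_zero)

lemma rpow_le_fr (r : ℝ) {n p : ℕ} (hp : p ∈ n.primeFactors) : (p : ℝ) ^ r ≤ fr r n := by
  have hpos : 0 < n.factorization p := by
    simpa [← Nat.support_factorization, Nat.pos_iff_ne_zero] using hp
  calc (p : ℝ) ^ r ≤ (n.factorization p : ℝ) * (p : ℝ) ^ r :=
        le_mul_of_one_le_left (by positivity) (mod_cast hpos)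
    _ ≤ fr r n := Finset.single_le_sum (f := fun q => (n.factorization q : ℝ) * (q : ℝ) ^ r)
        (fun q _ => by positivity) hp

lemma log_natCast_eq_sum_factorization {n : ℕ} (hn : n ≠ 0) :
    Real.log n = ∑ p ∈ n.primeFactors, (n.factorization p : ℝ) * Real.log p := by
  conv_lhs => rw [← Nat.prod_factorization_pow_eq_self hn]
  rw [Finsupp.prod, Nat.support_factorization, Nat.cast_prod,
    Real.log_prod fun p hp => by positivity [(Nat.prime_of_mem_primeFactors hp).pos]]
  simp [Real.log_pow]

lemma mul_rpow_mul_log_le_fr {n : ℕ} {c s t : ℝ} (hc : 0 ≤ c) (hs : 0 < s) (ht : 0 ≤ t)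
    (hn : ∀ p ∈ n.primeFactors, c ≤ p) : s * c ^ t * Real.log n ≤ fr (t + s) n := by
  rcases eq_or_ne n 0 with rfl | hn0
  · simp [fr]
  rw [log_natCast_eq_sum_factorization hn0, Finset.mul_sum, fr]
  refine Finset.sum_le_sum fun p hp => ?_
  have hp0 : (0 : ℝ) ≤ p := Nat.cast_nonneg p
  have hlog : s * Real.log p ≤ (p : ℝ) ^ s := by
    have := Real.log_le_rpow_div hp0 hs
    rwa [le_div_iff₀ hs, mul_comm] at this
  calc s * c ^ t * ((n.factorization p : ℝ) * Real.log p)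
      = (n.factorization p : ℝ) * (c ^ t * (s * Real.log p)) := by ring
    _ ≤ (n.factorization p : ℝ) * ((p : ℝ) ^ t * (p : ℝ) ^ s) := by
      have : 0 ≤ Real.log p := Real.log_natCast_nonneg p
      gcongr
      exact hn p hp
    _ = (n.factorization p : ℝ) * (p : ℝ) ^ (t + s) := by
      rw [Real.rpow_add' hp0 (by positivity)]

lemma two_pow_cardFactors_le {n : ℕ} (hn : n ≠ 0) : 2 ^ Ω n ≤ n := by
  rw [cardFactors_apply]
  conv_rhs => rw [← Nat.prod_primeFactorsList hn]
  exact List.pow_card_le_prod _ _ fun p hp => (Nat.prime_of_mem_primeFactorsList hp).two_le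

lemma neg_two_pow_eq_one_of_dvd {m k : ℕ} (hk : Odd k) (hm : m ∣ 2 ^ k + 1) :
    (-2 : ZMod m) ^ k = 1 := by
  have : ((2 ^ k + 1 : ℕ) : ZMod m) = 0 := (ZMod.natCast_eq_zero_iff _ _).mpr hm
  push_cast at this
  rw [hk.neg_pow]
  linear_combination -this

lemma not_nine_dvd_two_pow_add_one {k : ℕ} (hk : Odd k) (hk3 : ¬ 3 ∣ k) :
    ¬ 9 ∣ 2 ^ k + 1 := by
  intro h9
  have hord : orderOf (-2 : ZMod 9) = 3 := orderOf_eq_prime (by decide) (by decide)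
  exact hk3 (hord ▸ orderOf_dvd_of_pow_eq_one (neg_two_pow_eq_one_of_dvd hk h9))

lemma dvd_sub_one_of_dvd_two_pow_add_one {k p : ℕ} (hk : k.Prime) (hodd : Odd k) (hp : p.Prime)
    (hpk : p ∣ 2 ^ k + 1) (hp3 : p ≠ 3) : k ∣ p - 1 := by
  have := Fact.mk hk
  have := Fact.mk hp
  have hp2 : p ≠ 2 := by
    rintro rfl
    exact absurd hpk (by simp [Nat.dvd_add_right (dvd_pow_self 2 hk.ne_zero)])
  have hne : (-2 : ZMod p) ≠ 1 := by
    intro h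
    have : ((3 : ℕ) : ZMod p) = 0 := by push_cast; linear_combination -h
    rw [ZMod.natCast_eq_zero_iff, Nat.prime_dvd_prime_iff_eq hp Nat.prime_three] at this
    exact hp3 this
  have hne0 : (-2 : ZMod p) ≠ 0 := by
    intro h
    have : ((2 : ℕ) : ZMod p) = 0 := by push_cast; linear_combination -h
    rw [ZMod.natCast_eq_zero_iff, Nat.prime_dvd_prime_iff_eq hp Nat.prime_two] at this
    exact hp2 this
  rw [← orderOf_eq_prime (neg_two_pow_eq_one_of_dvd hodd hpk) hne]
  exact ZMod.orderOf_dvd_card_sub_one hne0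

lemma exists_two_pow_add_one_eq_three_mul {k : ℕ} (hk : k.Prime) (hk5 : 5 ≤ k) :
    ∃ M, 2 ^ k + 1 = 3 * M ∧ ∀ p ∈ M.primeFactors, k < p := by
  have hodd : Odd k := hk.odd_of_ne_two (by omega)
  obtain ⟨M, hM⟩ : 3 ∣ 2 ^ k + 1 := by simpa using hodd.nat_add_dvd_pow_add_pow 2 1
  refine ⟨M, hM, fun p hp => ?_⟩
  have hpM := Nat.dvd_of_mem_primeFactors hp
  have hp3 : p ≠ 3 := by
    rintro rfl
    refine not_nine_dvd_two_pow_add_one hodd ?_ (hM ▸ Nat.mul_dvd_mul_left 3 hpM)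
    rw [Nat.prime_dvd_prime_iff_eq Nat.prime_three hk]
    omega
  have hp := Nat.prime_of_mem_primeFactors hp
  have := Nat.le_of_dvd (by have := hp.two_le; omega)
    (dvd_sub_one_of_dvd_two_pow_add_one hk hodd hp (hM ▸ Dvd.dvd.mul_left hpM 3) hp3)
  omega

lemma exists_pos_fr_two_pow_eq {k : ℕ} (hk : k.Prime) (hk5 : 5 ≤ k) :
    ∃ r, 0 < r ∧ fr r (2 ^ k) = fr r (2 ^ k + 1) := by
  obtain ⟨M, hM, hMp⟩ := exists_two_pow_add_one_eq_three_mul hk hk5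
  have hM0 : M ≠ 0 := by rintro rfl; simp at hM
  have hfr (r : ℝ) : fr r (2 ^ k + 1) = 3 ^ r + fr r M := by
    rw [hM, fr_prime_mul r Nat.prime_three hM0, Nat.cast_ofNat]
  have h2k : 2 ^ 5 ≤ 2 ^ k := Nat.pow_le_pow_right two_pos hk5
  have hΩ : Ω M + 2 ≤ k := by
    by_contra! h
    have hpow : 2 ^ k ≤ 2 * 2 ^ Ω M := by
      rw [← pow_succ']
      exact Nat.pow_le_pow_right two_pos (by omega)
    have := two_pow_cardFactors_le hM0
    omega
  have h0 : fr 0 (2 ^ k + 1) < fr 0 (2 ^ k) := by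
    rw [hfr, fr_zero_eq_cardFactors, fr_prime_pow 0 Nat.prime_two, Real.rpow_zero, Real.rpow_zero]
    have : (Ω M : ℝ) + 2 ≤ k := by exact_mod_cast hΩ
    linarith
  have h2 : fr 2 (2 ^ k) < fr 2 (2 ^ k + 1) := by
    obtain ⟨p, hp⟩ := Nat.nonempty_primeFactors.mpr (show 1 < M by omega)
    have hkp : (k : ℝ) + 1 ≤ p := by exact_mod_cast hMp p hp
    have := rpow_le_fr 2 hp
    rw [hfr, fr_prime_pow 2 Nat.prime_two]
    norm_num [Real.rpow_two] at *
    nlinarith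
  obtain ⟨r, hr, hr0⟩ := intermediate_value_Ioo' zero_le_two
    ((continuous_fr (2 ^ k)).sub (continuous_fr (2 ^ k + 1))).continuousOn
    (show (0 : ℝ) ∈ Set.Ioo (fr 2 (2 ^ k) - fr 2 (2 ^ k + 1)) (fr 0 (2 ^ k) - fr 0 (2 ^ k + 1))
      from ⟨sub_neg.mpr h2, sub_pos.mpr h0⟩)
  exact ⟨r, hr.1, sub_eq_zero.mp hr0⟩

lemma rpow_half_mul_le_of_fr_two_pow_eq {r : ℝ} (hr : 0 < r) {k : ℕ} (hk : k.Prime)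
    (hk5 : 5 ≤ k) (h : fr r (2 ^ k) = fr r (2 ^ k + 1)) :
    (k : ℝ) ^ (r / 2) * (r * Real.log 2) ≤ 4 * 2 ^ r := by
  obtain ⟨M, hM, hMp⟩ := exists_two_pow_add_one_eq_three_mul hk hk5
  have hM0 : M ≠ 0 := by rintro rfl; simp at hM
  have hk0 : (0 : ℝ) < k := by exact_mod_cast hk.pos
  have hlogM : ((k : ℝ) - 2) * Real.log 2 ≤ Real.log M := by
    have h4M : (2 : ℝ) ^ k ≤ 4 * M := by exact_mod_cast (show 2 ^ k ≤ 4 * M by omega)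
    have := Real.log_le_log (by positivity) h4M
    rw [Real.log_mul four_ne_zero (Nat.cast_ne_zero.mpr hM0), Real.log_pow,
      show (4 : ℝ) = 2 ^ 2 by norm_num, Real.log_pow] at this
    push_cast at this
    linarith
  have hfrM := mul_rpow_mul_log_le_fr hk0.le (half_pos hr) (half_pos hr).le
    fun p hp => (show (k : ℝ) ≤ p by exact_mod_cast (hMp p hp).le)
  rw [add_halves] at hfrM
  have hfr : fr r M ≤ k * 2 ^ r := by
    have := fr_prime_pow r Nat.prime_two k
    push_cast at this
    rw [← this, h, hM, fr_prime_mul r Nat.prime_three hM0]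
    linarith [Real.rpow_nonneg (Nat.cast_nonneg 3) r]
  have hchain : r / 2 * (k : ℝ) ^ (r / 2) * (((k : ℝ) - 2) * Real.log 2) ≤ k * 2 ^ r :=
    (mul_le_mul_of_nonneg_left hlogM (by positivity)).trans (hfrM.trans hfr)
  have hk4 : (k : ℝ) ≤ 2 * ((k : ℝ) - 2) := by
    have : (5 : ℝ) ≤ k := by exact_mod_cast hk5
    linarith
  have hx : 0 ≤ (k : ℝ) ^ (r / 2) * (r * Real.log 2) := by
    have := Real.log_pos one_lt_two
    positivity
  refine le_of_mul_le_mul_left ?_ hk0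
  nlinarith

lemma finite_setOf_fr_two_pow_eq {r : ℝ} (hr : 0 < r) :
    {k : ℕ | k.Prime ∧ 5 ≤ k ∧ fr r (2 ^ k) = fr r (2 ^ k + 1)}.Finite := by
  have hev := ((tendsto_rpow_atTop (half_pos hr)).comp
    tendsto_natCast_atTop_atTop).eventually_gt_atTop (4 * 2 ^ r / (r * Real.log 2))
  rw [← Nat.cofinite_eq_atTop, eventually_cofinite] at hev
  refine hev.subset fun k ⟨hk, hk5, h⟩ => ?_
  have := rpow_half_mul_le_of_fr_two_pow_eq hr hk hk5 h
  rw [← le_div_iff₀ (mul_pos hr (Real.log_pos one_lt_two))] at this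
  exact this.not_gt

theorem stmt5 :
    {r : ℝ | 0 < r ∧ ∃ n : ℕ, 2 ≤ n ∧ fr r n = fr r (n + 1)}.Infinite := by
  intro hfin
  have hprimes : {k : ℕ | k.Prime ∧ 5 ≤ k}.Infinite :=
    (Nat.infinite_setOfPred_prime.sdiff (Set.finite_lt_nat 5)).mono
      fun k hk => ⟨hk.1, not_lt.mp hk.2⟩
  refine hprimes ((hfin.biUnion fun r hr => finite_setOf_fr_two_pow_eq hr.1).subset ?_)
  rintro k ⟨hk, hk5⟩
  obtain ⟨r, hr, h⟩ := exists_pos_fr_two_pow_eq hk hk5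
  exact Set.mem_biUnion ⟨hr, 2 ^ k, Nat.le_self_pow hk.ne_zero 2, h⟩ ⟨hk, hk5, h⟩
end

section
/- For every prime p ≥ 7, there exists exactly one real number r > 0 such that f_r(p² − 1) = f_r(p²), and this r satisfies 0 < r < 1. -/
lemma fr_eq_sum (r : ℝ) (n : ℕ) :
    fr r n = n.factorization.sum (fun q a => (a : ℝ) * (q : ℝ) ^ r) := by
  rw [fr, Finsupp.sum, Nat.support_factorization]

lemma fr_mul_s6 (r : ℝ) {m n : ℕ} (hm : m ≠ 0) (hn : n ≠ 0) :
    fr r (m * n) = fr r m + fr r n := by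
  rw [fr_eq_sum, fr_eq_sum, fr_eq_sum, Nat.factorization_mul hm hn]
  apply Finsupp.sum_add_index'
  · intro a; simp
  · intro a b c; push_cast; ring

lemma fr_prime (r : ℝ) {q : ℕ} (hq : q.Prime) : fr r q = (q : ℝ) ^ r := by
  simp [fr, hq.primeFactors, hq.factorization]

lemma fr_one_le (m : ℕ) : fr 1 m ≤ (m : ℝ) := by
  induction m using Nat.strong_induction_on with
  | _ m ih =>
    rcases eq_or_ne m 0 with rfl | h0
    · simp [fr]
    rcases eq_or_ne m 1 with rfl | h1
    · simp [fr]
    have hq := Nat.minFac_prime h1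
    set q := m.minFac with hqdef
    have hqd : q ∣ m := Nat.minFac_dvd m
    have hd : m = q * (m / q) := (Nat.mul_div_cancel' hqd).symm
    have hdlt : m / q < m := Nat.div_lt_self (Nat.pos_of_ne_zero h0) hq.two_le
    have hd0 : m / q ≠ 0 := by
      intro h; rw [h, mul_zero] at hd; exact h0 hd
    have key : fr 1 m = (q : ℝ) ^ (1:ℝ) + fr 1 (m / q) := by
      conv_lhs => rw [hd]
      rw [fr_mul_s6 1 hq.ne_zero hd0, fr_prime 1 hq]
    rw [key, Real.rpow_one]
    set d := m / q with hddef
    have hih := ih d hdlt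
    rcases eq_or_ne d 1 with he | he
    · have hfr1 : fr 1 d = 0 := by rw [he]; simp [fr]
      have : m = q := by rw [hd, he, mul_one]
      rw [hfr1, this, add_zero]
    · have h2 : 2 ≤ d := (Nat.two_le_iff d).mpr ⟨hd0, he⟩
      have hq2' : (2:ℝ) ≤ (q:ℝ) := by exact_mod_cast hq.two_le
      have hd2' : (2:ℝ) ≤ (d:ℝ) := by exact_mod_cast h2
      have hmain : (q : ℝ) + (d : ℝ) ≤ (q : ℝ) * (d : ℝ) := by nlinarith
      have hm : (m : ℝ) = (q : ℝ) * (d : ℝ) := by rw [← Nat.cast_mul, ← hd]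
      linarith

lemma fr_zero_ge {m : ℕ} (hm : 2 ≤ m) : 1 ≤ fr 0 m := by
  have hne : m.primeFactors.Nonempty := Nat.nonempty_primeFactors.mpr hm
  obtain ⟨q, hq⟩ := hne
  have hmem := hq
  rw [Nat.mem_primeFactors] at hmem
  have hpos : 0 < m.factorization q :=
    (Nat.Prime.factorization_pos_of_dvd hmem.1 hmem.2.2 hmem.2.1)
  have h1 : (1:ℝ) ≤ (m.factorization q : ℝ) * (q:ℝ) ^ (0:ℝ) := by
    rw [Real.rpow_zero, mul_one]
    exact_mod_cast hpos
  rw [fr]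
  refine le_trans h1 (Finset.single_le_sum (f := fun i => (m.factorization i : ℝ) * (i:ℝ) ^ (0:ℝ)) (fun i _ => by positivity) hq)

theorem stmt6 (p : ℕ) (hp : p.Prime) (hp7 : 7 ≤ p) :
    (∃! r : ℝ, 0 < r ∧ fr r (p ^ 2 - 1) = fr r (p ^ 2)) ∧
    (∀ r : ℝ, 0 < r → fr r (p ^ 2 - 1) = fr r (p ^ 2) → r < 1) := by
  obtain ⟨k, hk⟩ : Odd p := hp.odd_of_ne_two (by omega)
  have hk3 : 3 ≤ k := by omega
  have hsq : p ^ 2 = 4 * k ^ 2 + 4 * k + 1 := by subst hk; ring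
  have hprod : (2 * k) * (2 * (k + 1)) = 4 * k ^ 2 + 4 * k := by ring
  have hn : p ^ 2 - 1 = (2 * k) * (2 * (k + 1)) := by omega
  have hn2 : 2 ≤ p ^ 2 - 1 := by omega
  have hpR : (0 : ℝ) < (p : ℝ) := by exact_mod_cast hp.pos
  have hdec : ∀ r : ℝ, fr r (p ^ 2 - 1) =
      (2 : ℝ) ^ r + fr r k + ((2 : ℝ) ^ r + fr r (k + 1)) := by
    intro r
    rw [hn, fr_mul_s6 r (by omega) (by omega), fr_mul_s6 r (by omega) (by omega),
      fr_mul_s6 r (by omega) (by omega), fr_prime r Nat.prime_two]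
    norm_num
  have hq_lt : ∀ q ∈ (p ^ 2 - 1).primeFactors, 2 ≤ q ∧ q < p := by
    intro q hq
    rw [Nat.mem_primeFactors] at hq
    refine ⟨hq.1.two_le, ?_⟩
    have hdvd : q ∣ (2 * k) * (2 * (k + 1)) := hn ▸ hq.2.1
    rcases (Nat.Prime.dvd_mul hq.1).mp hdvd with h | h
    · rcases (Nat.Prime.dvd_mul hq.1).mp h with h2 | hk'
      · have := (Nat.prime_dvd_prime_iff_eq hq.1 Nat.prime_two).mp h2; omega
      · have := Nat.le_of_dvd (by omega) hk'; omega
    · rcases (Nat.Prime.dvd_mul hq.1).mp h with h2 | hk'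
      · have := (Nat.prime_dvd_prime_iff_eq hq.1 Nat.prime_two).mp h2; omega
      · have := Nat.le_of_dvd (by omega) hk'; omega
  set F : Finset ℕ := (p ^ 2 - 1).primeFactors with hF
  set H : ℝ → ℝ := fun r => ∑ q ∈ F,
    ((p ^ 2 - 1).factorization q : ℝ) * ((q : ℝ) / (p : ℝ)) ^ r with hH
  have key1 : ∀ r : ℝ, (p : ℝ) ^ r * H r = fr r (p ^ 2 - 1) := by
    intro r
    rw [hH, fr, Finset.mul_sum]
    refine Finset.sum_congr rfl fun q hq => ?_
    rw [Real.div_rpow (by positivity) hpR.le]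
    have hpr : ((p : ℝ) ^ r) ≠ 0 := ne_of_gt (Real.rpow_pos_of_pos hpR r)
    field_simp
  have hanti : StrictAnti H := by
    intro x y hxy
    apply Finset.sum_lt_sum_of_nonempty (Nat.nonempty_primeFactors.mpr hn2)
    intro q hq
    obtain ⟨hq2, hqp⟩ := hq_lt q hq
    have hb0 : (0 : ℝ) < (q : ℝ) / (p : ℝ) := by
      have : (0:ℝ) < (q:ℝ) := by exact_mod_cast (by omega : 0 < q)
      positivity
    have hb1 : (q : ℝ) / (p : ℝ) < 1 :=
      (div_lt_one hpR).mpr (by exact_mod_cast hqp)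
    have hmem := hq
    rw [Nat.mem_primeFactors] at hmem
    have ha : 0 < ((p ^ 2 - 1).factorization q : ℝ) := by
      exact_mod_cast hmem.1.factorization_pos_of_dvd hmem.2.2 hmem.2.1
    exact mul_lt_mul_of_pos_left (Real.rpow_lt_rpow_of_exponent_gt hb0 hb1 hxy) ha
  have hcont : Continuous H := by
    apply continuous_finset_sum
    intro q hq
    refine continuous_const.mul ?_
    have hb0 : ((q : ℝ) / (p : ℝ)) ≠ 0 := by
      obtain ⟨hq2, _⟩ := hq_lt q hq
      have : (0:ℝ) < (q:ℝ) := by exact_mod_cast (by omega : 0 < q)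
      positivity
    exact continuous_iff_continuousAt.mpr fun x => Real.continuousAt_const_rpow hb0
  have hkR : (p : ℝ) = 2 * (k : ℝ) + 1 := by exact_mod_cast congrArg (Nat.cast : ℕ → ℝ) hk
  have hH0 : 2 < H 0 := by
    have h0 : H 0 = fr 0 (p ^ 2 - 1) := by
      have := key1 0; rwa [Real.rpow_zero, one_mul] at this
    rw [h0, hdec 0, Real.rpow_zero]
    have h1 := fr_zero_ge (m := k) (by omega)
    have h2 := fr_zero_ge (m := k + 1) (by omega)
    push_cast at h2 ⊢
    linarith
  have hH1 : H 1 < 2 := by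
    have h1 : (p : ℝ) * H 1 = fr 1 (p ^ 2 - 1) := by
      have := key1 1; rwa [Real.rpow_one] at this
    have hb : fr 1 (p ^ 2 - 1) ≤ 2 * (p : ℝ) + ((4 : ℝ) - (p : ℝ)) := by
      rw [hdec 1, Real.rpow_one]
      have h2 := fr_one_le k
      have h3 := fr_one_le (k + 1)
      push_cast at h3 ⊢
      rw [hkR]
      linarith
    have hlt : (p : ℝ) * H 1 < (p : ℝ) * 2 := by
      have hp7R : (7 : ℝ) ≤ (p : ℝ) := by exact_mod_cast hp7
      rw [h1]; linarith
    exact lt_of_mul_lt_mul_left hlt hpR.le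
  have hiff : ∀ s : ℝ, (fr s (p ^ 2 - 1) = fr s (p ^ 2) ↔ H s = 2) := by
    intro s
    have hfr2 : fr s (p ^ 2) = (p : ℝ) ^ s * 2 := by
      rw [pow_two, fr_mul_s6 s hp.pos.ne' hp.pos.ne', fr_prime s hp]; ring
    rw [← key1 s, hfr2]
    exact mul_right_inj' (ne_of_gt (Real.rpow_pos_of_pos hpR s))
  obtain ⟨r, hrIoo, hHr⟩ :=
    intermediate_value_Ioo' (by norm_num : (0:ℝ) ≤ 1) hcont.continuousOn ⟨hH1, hH0⟩
  refine ⟨⟨r, ⟨hrIoo.1, (hiff r).mpr hHr⟩, ?_⟩, ?_⟩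
  · rintro s ⟨hs, hseq⟩
    exact hanti.injective (((hiff s).mp hseq).trans hHr.symm)
  · intro s hs hseq
    by_contra hge
    push_neg at hge
    have h1 := hanti.antitone hge
    have h2 := (hiff s).mp hseq
    linarith
end

section
/- For every prime p ≥ 7, the function g(r) = f_r(p²) − f_r(p² − 1) = 2·p^r − f_r(p² − 1) is strictly increasing in r on the interval (0, ∞). -/
/-!
Differentiating in `r`, `d/dr f_r(n) = ∑ aᵢ pᵢ^r log pᵢ`. If every prime factor of `n` is at
most `B` and `r ≥ 0`, this is at most `B^r ∑ aᵢ log pᵢ = B^r log n`. Every prime factor of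
`p² - 1 = (p - 1)(p + 1)` is at most `p` (the even number `p + 1 > 2` is not prime), so the
derivative of `f_r(p² - 1)` is at most `p^r log (p² - 1) < p^r log p² = d/dr f_r(p²)`.
-/

open Real

lemma hasDerivAt_fr (n : ℕ) (r : ℝ) :
    HasDerivAt (fun s => fr s n)
      (∑ q ∈ n.primeFactors, (n.factorization q : ℝ) * ((q : ℝ) ^ r * log q)) r :=
  HasDerivAt.fun_sum fun q hq =>
    ((hasStrictDerivAt_const_rpow (by exact_mod_cast (Nat.prime_of_mem_primeFactors hq).pos)
      r).hasDerivAt).const_mul _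

lemma sum_factorization_mul_rpow_log_prime_pow {p : ℕ} (hp : p.Prime) (k : ℕ) (r : ℝ) :
    ∑ q ∈ (p ^ k).primeFactors, ((p ^ k).factorization q : ℝ) * ((q : ℝ) ^ r * log q) =
      (p : ℝ) ^ r * log ((p ^ k : ℕ) : ℝ) := by
  rcases eq_or_ne k 0 with rfl | hk
  · simp
  · simp [Nat.primeFactors_prime_pow hk hp, hp.factorization_pow]
    ring

lemma sum_factorization_mul_rpow_log_le {n : ℕ} {B r : ℝ} (hr : 0 ≤ r)
    (hB : ∀ q ∈ n.primeFactors, (q : ℝ) ≤ B) :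
    ∑ q ∈ n.primeFactors, (n.factorization q : ℝ) * ((q : ℝ) ^ r * log q) ≤ B ^ r * log n := by
  rw [log_nat_eq_sum_factorization, Finsupp.sum, Nat.support_factorization, Finset.mul_sum]
  refine Finset.sum_le_sum fun q hq => ?_
  calc (n.factorization q : ℝ) * ((q : ℝ) ^ r * log q)
      ≤ (n.factorization q : ℝ) * (B ^ r * log q) := by
        gcongr
        exact hB q hq
    _ = B ^ r * ((n.factorization q : ℝ) * log q) := by ring

lemma Nat.le_of_mem_primeFactors_sq_sub_one {p q : ℕ} (hp : Odd p)
    (hq : q ∈ (p ^ 2 - 1).primeFactors) : q ≤ p := by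
  have hqp := Nat.prime_of_mem_primeFactors hq
  have hp1 : 2 ≤ p := by
    by_contra! h
    interval_cases p <;> simp at hq
  have hdvd : q ∣ (p - 1) * (p + 1) := by
    rw [mul_comm, ← Nat.sq_sub_sq, one_pow]
    exact Nat.dvd_of_mem_primeFactors hq
  rcases hqp.dvd_mul.mp hdvd with h | h
  · exact (Nat.le_of_dvd (by omega) h).trans (Nat.sub_le p 1)
  · rcases (Nat.le_of_dvd (by omega) h).lt_or_eq with hlt | heq
    · omega
    · have := (Nat.Prime.even_iff hqp).mp (heq ▸ hp.add_one)
      omega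

theorem stmt7 (p : ℕ) (hp : p.Prime) (hp7 : 7 ≤ p) :
    StrictMonoOn (fun r : ℝ => fr r (p ^ 2) - fr r (p ^ 2 - 1)) (Set.Ioi 0) := by
  have hodd : Odd p := hp.odd_of_ne_two (by omega)
  have hderiv r := (hasDerivAt_fr (p ^ 2) r).sub (hasDerivAt_fr (p ^ 2 - 1) r)
  refine strictMonoOn_of_hasDerivWithinAt_pos (convex_Ioi 0)
    (fun r _ => (hderiv r).continuousAt.continuousWithinAt)
    (fun r _ => (hderiv r).hasDerivWithinAt) fun r hr => ?_
  rw [interior_Ioi, Set.mem_Ioi] at hr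
  have hp_sq : 1 < p ^ 2 := by nlinarith
  rw [sub_pos, sum_factorization_mul_rpow_log_prime_pow hp]
  calc _ ≤ (p : ℝ) ^ r * log ((p ^ 2 - 1 : ℕ) : ℝ) :=
        sum_factorization_mul_rpow_log_le hr.le fun q hq =>
          by exact_mod_cast Nat.le_of_mem_primeFactors_sq_sub_one hodd hq
    _ < (p : ℝ) ^ r * log ((p ^ 2 : ℕ) : ℝ) := by
        gcongr
        · exact_mod_cast (by omega : 0 < p ^ 2 - 1)
        · omega
end

section
/- There exists a constant C > 0 such that for all sufficiently large x, the number of integers n with 2 ≤ n ≤ x for which it fails that both P(n) > x^{1/ log log x} and P(n+1) > x^{1/ log log x} is at most C·x/(log x)². -/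
open Finset Real

/-- `P n` is the largest prime factor of `n` (and `0` if `n ≤ 1`). -/
def P (n : ℕ) : ℕ := n.primeFactors.sup id


-- Chebyshev from primorial
lemma cheb (m : ℕ) : ∑ p ∈ m.primesBelow, Real.log p ≤ m * Real.log 4 := by
  rcases Nat.eq_zero_or_pos m with rfl | hm
  · simp [Nat.primesBelow]
  · have h1 : m.primesBelow = Finset.filter Nat.Prime (Finset.range ((m-1) + 1)) := by
      unfold Nat.primesBelow
      rw [Nat.sub_add_cancel hm]
    have h2 : ∑ p ∈ m.primesBelow, Real.log p = Real.log (primorial (m-1) : ℝ) := by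
      rw [h1, primorial]
      push_cast
      rw [Real.log_prod]
      intro p hp
      have := (Finset.mem_filter.mp hp).2.pos
      positivity
    rw [h2]
    calc Real.log (primorial (m-1) : ℝ) ≤ Real.log ((4:ℝ) ^ (m-1)) := by
          apply Real.log_le_log (by exact_mod_cast primorial_pos (m-1))
          exact_mod_cast primorial_le_4_pow (m-1)
      _ = (m-1 : ℕ) * Real.log 4 := by rw [Real.log_pow]
      _ ≤ m * Real.log 4 := by
          have : ((m-1 : ℕ) : ℝ) ≤ m := by exact_mod_cast Nat.sub_le m 1
          have h4 : 0 ≤ Real.log 4 := Real.log_nonneg (by norm_num)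
          nlinarith

-- harmonic bound
lemma harm (m : ℕ) : ∑ k ∈ Finset.Icc 1 m, (k:ℝ)⁻¹ ≤ 1 + Real.log m := by
  induction m with
  | zero => simp
  | succ n ih =>
    rcases Nat.eq_zero_or_pos n with rfl | hn
    · simp
    · rw [Finset.sum_Icc_succ_top (by omega)]
      have hlog : Real.log n + ((n:ℝ)+1)⁻¹ ≤ Real.log (n+1) := by
        have h1 : Real.log ((n:ℝ)/(n+1)) ≤ (n:ℝ)/(n+1) - 1 := by
          apply Real.log_le_sub_one_of_pos; positivity
        have h2 : Real.log ((n:ℝ)/(n+1)) = Real.log n - Real.log (n+1) := by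
          rw [Real.log_div (by positivity) (by positivity)]
        have h3 : (n:ℝ)/(n+1) - 1 = -((n:ℝ)+1)⁻¹ := by field_simp; ring
        linarith [h1, h2.symm.le]
      push_cast
      linarith


lemma geomsum (K : ℕ) {d : ℝ} (hd : 0 < d) :
    ∑ k ∈ Finset.Icc 1 K, Real.exp (k * d) ≤ Real.exp ((K+1) * d) / d := by
  have hr : (1:ℝ) < Real.exp d := by
    rw [← Real.exp_zero]; exact Real.exp_lt_exp.mpr hd
  calc ∑ k ∈ Finset.Icc 1 K, Real.exp (k * d)
      ≤ ∑ k ∈ Finset.range (K+1), Real.exp (k * d) := by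
        apply Finset.sum_le_sum_of_subset_of_nonneg
        · intro k hk
          simp only [Finset.mem_Icc] at hk
          exact Finset.mem_range.mpr (by omega)
        · intros; positivity
    _ = ∑ k ∈ Finset.range (K+1), (Real.exp d) ^ k :=
        Finset.sum_congr rfl fun k _ => Real.exp_nat_mul d k
    _ = ((Real.exp d) ^ (K+1) - 1) / (Real.exp d - 1) := geom_sum_eq (ne_of_gt hr) _
    _ ≤ Real.exp ((K+1) * d) / d := by
        apply div_le_div₀ (Real.exp_nonneg _) _ hd
        · linarith [Real.add_one_le_exp d]
        · have : (Real.exp d) ^ (K+1) = Real.exp ((K+1) * d) := by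
            rw [← Real.exp_nat_mul]; push_cast; ring_nf
          linarith [this.le]

lemma Sbound (N : ℕ) (hN : 1 ≤ N) (δ : ℝ) (hδ0 : 0 < δ) (hδ1 : δ * Real.log 2 ≤ 1) (hδ2 : δ ≤ 1/2) :
    ∑ p ∈ N.primesBelow, (p:ℝ) ^ (-(1-δ)) ≤
      4*Real.exp 2*(1 + Real.log (2/(δ*Real.log 2))) + 4*Real.exp 1 * Real.exp (δ * Real.log N) := by
  have hl2 : (0:ℝ) < Real.log 2 := Real.log_pos (by norm_num)
  set d : ℝ := δ * Real.log 2 with hdd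
  have hd : 0 < d := by positivity
  set K := Nat.log 2 N with hK
  set K₀ := ⌈1/d⌉₊ with hK0
  have hK0ge : 1/d ≤ (K₀:ℝ) := Nat.le_ceil _
  have hK0le : (K₀:ℝ) ≤ 1/d + 1 := le_of_lt (Nat.ceil_lt_add_one (by positivity))
  have hK01 : 1 ≤ K₀ := Nat.one_le_ceil_iff.mpr (by positivity)
  have hmaps : ∀ p ∈ N.primesBelow, Nat.log 2 p ∈ Finset.Icc 1 K := by
    intro p hp
    obtain ⟨hlt, hpp⟩ := Nat.mem_primesBelow.mp hp
    rw [Finset.mem_Icc]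
    exact ⟨Nat.le_log_of_pow_le one_lt_two (by simpa using hpp.two_le),
      Nat.log_mono_right (le_of_lt hlt)⟩
  rw [← Finset.sum_fiberwise_of_maps_to hmaps (fun p => (p:ℝ) ^ (-(1-δ)))]
  have inner : ∀ k ∈ Finset.Icc 1 K,
      (∑ p ∈ N.primesBelow with Nat.log 2 p = k, (p:ℝ) ^ (-(1-δ)))
        ≤ (4/k) * Real.exp (k * d) := by
    intro k hk
    obtain ⟨hk1, hkK⟩ := Finset.mem_Icc.mp hk
    have hk0 : (0:ℝ) < k := by exact_mod_cast hk1
    set F := N.primesBelow.filter (fun p => Nat.log 2 p = k) with hF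
    have hFsub : F ⊆ Nat.primesBelow (2^(k+1)) := by
      intro p hp
      obtain ⟨hpmem, hplog⟩ := Finset.mem_filter.mp hp
      obtain ⟨_, hpp⟩ := Nat.mem_primesBelow.mp hpmem
      refine Nat.mem_primesBelow.mpr ⟨?_, hpp⟩
      calc p < 2 ^ (Nat.log 2 p + 1) := Nat.lt_pow_succ_log_self one_lt_two p
        _ = 2 ^ (k+1) := by rw [hplog]
    have hple : ∀ p ∈ F, (2:ℝ)^k ≤ (p:ℝ) := by
      intro p hp
      obtain ⟨hpmem, hplog⟩ := Finset.mem_filter.mp hp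
      obtain ⟨_, hpp⟩ := Nat.mem_primesBelow.mp hpmem
      have : 2 ^ k ≤ p := by
        rw [← hplog]; exact Nat.pow_log_le_self 2 hpp.pos.ne'
      exact_mod_cast this
    have hcard : (F.card : ℝ) * ((k:ℝ) * Real.log 2) ≤ 2^(k+1) * Real.log 4 := by
      calc (F.card : ℝ) * ((k:ℝ) * Real.log 2) = ∑ _p ∈ F, (k : ℝ) * Real.log 2 := by
            rw [Finset.sum_const, nsmul_eq_mul]
        _ ≤ ∑ p ∈ F, Real.log p := by
            apply Finset.sum_le_sum
            intro p hp
            have h1 := hple p hp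
            have h2 : (k:ℝ) * Real.log 2 = Real.log ((2:ℝ)^k) := by rw [Real.log_pow]
            rw [h2]
            exact Real.log_le_log (by positivity) h1
        _ ≤ ∑ p ∈ Nat.primesBelow (2^(k+1)), Real.log p := by
            apply Finset.sum_le_sum_of_subset_of_nonneg hFsub
            intro p hp _
            obtain ⟨_, hpp⟩ := Nat.mem_primesBelow.mp hp
            exact Real.log_nonneg (by exact_mod_cast hpp.one_lt.le)
        _ ≤ (2^(k+1) : ℕ) * Real.log 4 := cheb _
        _ = 2^(k+1) * Real.log 4 := by push_cast; ring
    have hterm : ∀ p ∈ F, (p:ℝ) ^ (-(1-δ)) ≤ Real.exp (-(1-δ) * ((k:ℝ) * Real.log 2)) := by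
      intro p hp
      have h2k : (0:ℝ) < (2:ℝ)^k := by positivity
      calc (p:ℝ) ^ (-(1-δ)) ≤ ((2:ℝ)^k) ^ (-(1-δ)) :=
            Real.rpow_le_rpow_of_nonpos h2k (hple p hp) (by linarith)
        _ = Real.exp (-(1-δ) * ((k:ℝ) * Real.log 2)) := by
            rw [Real.rpow_def_of_pos h2k, Real.log_pow]
            ring_nf
    calc (∑ p ∈ F, (p:ℝ) ^ (-(1-δ))) ≤ ∑ _p ∈ F, Real.exp (-(1-δ) * ((k:ℝ) * Real.log 2)) :=
          Finset.sum_le_sum hterm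
      _ = (F.card : ℝ) * Real.exp (-(1-δ) * ((k:ℝ) * Real.log 2)) := by
          rw [Finset.sum_const, nsmul_eq_mul]
      _ ≤ (2^(k+1) * Real.log 4 / ((k:ℝ) * Real.log 2)) * Real.exp (-(1-δ) * ((k:ℝ) * Real.log 2)) := by
          apply mul_le_mul_of_nonneg_right _ (Real.exp_nonneg _)
          rw [le_div_iff₀ (by positivity)]
          exact hcard
      _ = (4/k) * Real.exp (k * d) := by
          have hlog4 : Real.log 4 = 2 * Real.log 2 := by
            rw [show (4:ℝ) = 2^2 by norm_num, Real.log_pow]; push_cast; ring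
          calc 2^(k+1) * Real.log 4 / ((k:ℝ) * Real.log 2) * Real.exp (-(1-δ) * ((k:ℝ) * Real.log 2))
              = (4/k) * (Real.exp ((k:ℝ) * Real.log 2) * Real.exp (-(1-δ) * ((k:ℝ) * Real.log 2))) := by
                have h2k : ((2:ℝ))^k = Real.exp ((k:ℝ) * Real.log 2) := by
                  rw [← Real.exp_log (show (0:ℝ) < 2^k by positivity), Real.log_pow]
                rw [hlog4, pow_succ, h2k]
                field_simp
                ring
            _ = (4/k) * Real.exp (k * d) := by
                rw [← Real.exp_add]
                congr 1
                rw [hdd]; ring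
  calc ∑ k ∈ Finset.Icc 1 K, (∑ p ∈ N.primesBelow with Nat.log 2 p = k, (p:ℝ) ^ (-(1-δ)))
      ≤ ∑ k ∈ Finset.Icc 1 K, (4/k) * Real.exp (k * d) := Finset.sum_le_sum inner
    _ = (∑ k ∈ (Finset.Icc 1 K).filter (fun k => k ≤ K₀), (4/(k:ℝ)) * Real.exp (k * d))
        + (∑ k ∈ (Finset.Icc 1 K).filter (fun k => ¬ k ≤ K₀), (4/(k:ℝ)) * Real.exp (k * d)) :=
        (Finset.sum_filter_add_sum_filter_not _ _ _).symm
    _ ≤ 4*Real.exp 2*(1 + Real.log (2/d)) + 4*Real.exp 1 * Real.exp (δ * Real.log N) := by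
        have part1 : (∑ k ∈ (Finset.Icc 1 K).filter (fun k => k ≤ K₀), (4/(k:ℝ)) * Real.exp (k * d))
            ≤ 4*Real.exp 2*(1 + Real.log (2/d)) := by
          calc (∑ k ∈ (Finset.Icc 1 K).filter (fun k => k ≤ K₀), (4/(k:ℝ)) * Real.exp (k * d))
              ≤ ∑ k ∈ (Finset.Icc 1 K).filter (fun k => k ≤ K₀), (4*Real.exp 2) * (k:ℝ)⁻¹ := by
                apply Finset.sum_le_sum
                intro k hk
                obtain ⟨hmem, hkK₀⟩ := Finset.mem_filter.mp hk
                obtain ⟨hk1, _⟩ := Finset.mem_Icc.mp hmem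
                have hk0 : (0:ℝ) < k := by exact_mod_cast hk1
                have hkd : (k:ℝ) * d ≤ 2 := by
                  have h1 : (k:ℝ) ≤ K₀ := by exact_mod_cast hkK₀
                  have h2 : (k:ℝ) * d ≤ (K₀:ℝ) * d := by nlinarith
                  have h3 : (K₀:ℝ) * d ≤ (1/d + 1) * d := by nlinarith
                  have h4 : (1/d + 1) * d = 1 + d := by field_simp
                  nlinarith
                have : Real.exp ((k:ℝ) * d) ≤ Real.exp 2 := Real.exp_le_exp.mpr hkd
                rw [div_eq_mul_inv]
                calc 4 * (k:ℝ)⁻¹ * Real.exp (k * d) ≤ 4 * (k:ℝ)⁻¹ * Real.exp 2 := by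
                      apply mul_le_mul_of_nonneg_left this (by positivity)
                  _ = 4*Real.exp 2 * (k:ℝ)⁻¹ := by ring
            _ ≤ ∑ k ∈ Finset.Icc 1 K₀, (4*Real.exp 2) * (k:ℝ)⁻¹ := by
                apply Finset.sum_le_sum_of_subset_of_nonneg
                · intro k hk
                  obtain ⟨hmem, hkK₀⟩ := Finset.mem_filter.mp hk
                  obtain ⟨hk1, _⟩ := Finset.mem_Icc.mp hmem
                  exact Finset.mem_Icc.mpr ⟨hk1, hkK₀⟩
                · intros; positivity
            _ = (4*Real.exp 2) * ∑ k ∈ Finset.Icc 1 K₀, (k:ℝ)⁻¹ := by rw [Finset.mul_sum]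
            _ ≤ (4*Real.exp 2) * (1 + Real.log K₀) := by
                apply mul_le_mul_of_nonneg_left (harm K₀) (by positivity)
            _ ≤ 4*Real.exp 2*(1 + Real.log (2/d)) := by
                apply mul_le_mul_of_nonneg_left _ (by positivity)
                have h1 : (K₀:ℝ) ≤ 2/d := by
                  have : 1/d + 1 ≤ 2/d := by
                    rw [div_add' _ _ _ (ne_of_gt hd), div_le_div_iff₀ hd hd]
                    nlinarith
                  linarith
                have h2 : Real.log K₀ ≤ Real.log (2/d) :=
                  Real.log_le_log (by exact_mod_cast hK01) h1
                linarith
        have part2 : (∑ k ∈ (Finset.Icc 1 K).filter (fun k => ¬ k ≤ K₀), (4/(k:ℝ)) * Real.exp (k * d))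
            ≤ 4*Real.exp 1 * Real.exp (δ * Real.log N) := by
          calc (∑ k ∈ (Finset.Icc 1 K).filter (fun k => ¬ k ≤ K₀), (4/(k:ℝ)) * Real.exp (k * d))
              ≤ ∑ k ∈ (Finset.Icc 1 K).filter (fun k => ¬ k ≤ K₀), (4*d) * Real.exp (k * d) := by
                apply Finset.sum_le_sum
                intro k hk
                obtain ⟨hmem, hkK₀⟩ := Finset.mem_filter.mp hk
                obtain ⟨hk1, _⟩ := Finset.mem_Icc.mp hmem
                push_neg at hkK₀
                have hk0 : (0:ℝ) < k := by exact_mod_cast hk1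
                have h1 : (K₀:ℝ) ≤ k := by exact_mod_cast hkK₀.le
                have h2 : 1/d ≤ (k:ℝ) := le_trans hK0ge h1
                have h3 : 4/(k:ℝ) ≤ 4*d := by
                  rw [div_le_iff₀ hk0]
                  have h4 := mul_le_mul_of_nonneg_right h2 hd.le
                  rw [one_div, inv_mul_cancel₀ (ne_of_gt hd)] at h4
                  nlinarith
                apply mul_le_mul_of_nonneg_right h3 (Real.exp_nonneg _)
            _ ≤ ∑ k ∈ Finset.Icc 1 K, (4*d) * Real.exp (k * d) := by
                apply Finset.sum_le_sum_of_subset_of_nonneg (Finset.filter_subset _ _)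
                intros; positivity
            _ = (4*d) * ∑ k ∈ Finset.Icc 1 K, Real.exp (k * d) := by rw [Finset.mul_sum]
            _ ≤ (4*d) * (Real.exp ((K+1) * d) / d) := by
                apply mul_le_mul_of_nonneg_left (geomsum K hd) (by positivity)
            _ = 4 * Real.exp (((K:ℝ)+1) * d) := by field_simp
            _ ≤ 4*Real.exp 1 * Real.exp (δ * Real.log N) := by
                have hKd : (K:ℝ) * d ≤ δ * Real.log N := by
                  have h1 : (2:ℝ)^K ≤ N := by
                    have := Nat.pow_log_le_self 2 (show N ≠ 0 by omega)
                    exact_mod_cast this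
                  have h2 : (K:ℝ) * Real.log 2 ≤ Real.log N := by
                    have := Real.log_le_log (by positivity) h1
                    rwa [Real.log_pow] at this
                  calc (K:ℝ) * d = δ * ((K:ℝ) * Real.log 2) := by rw [hdd]; ring
                    _ ≤ δ * Real.log N := by nlinarith
                have hexp : Real.exp (((K:ℝ)+1)*d) = Real.exp ((K:ℝ)*d) * Real.exp d := by
                  rw [← Real.exp_add]; ring_nf
                rw [hexp]
                have e1 : Real.exp ((K:ℝ)*d) ≤ Real.exp (δ * Real.log N) := Real.exp_le_exp.mpr hKd
                have e2 : Real.exp d ≤ Real.exp 1 := Real.exp_le_exp.mpr hδ1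
                nlinarith [Real.exp_pos ((K:ℝ)*d), Real.exp_pos d, Real.exp_pos (δ * Real.log N), Real.exp_pos 1]
        linarith [part1, part2]


lemma rankin (N : ℕ) (σ : ℝ) (hσ0 : 0 < σ) (x : ℝ) (hx : 0 ≤ x) :
    (((Finset.Icc 2 ⌊x⌋₊).filter (· ∈ Nat.smoothNumbers N)).card : ℝ)
      ≤ x ^ σ * ∏ p ∈ N.primesBelow, (1 - (p:ℝ) ^ (-σ))⁻¹ := by
  classical
  set f : ℕ → ℝ := fun n => (n:ℝ) ^ (-σ) with hf
  have hf₁ : f 1 = 1 := by simp [hf]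
  have hfnn : ∀ n, 0 ≤ f n := fun n => Real.rpow_nonneg (Nat.cast_nonneg n) _
  have hmul : ∀ {m n : ℕ}, Nat.Coprime m n → f (m*n) = f m * f n := by
    intro m n _
    simp only [hf]
    push_cast
    exact Real.mul_rpow (Nat.cast_nonneg m) (Nat.cast_nonneg n)
  have hpt : ∀ (p : ℕ), p.Prime → ∀ n : ℕ, f (p^n) = ((p:ℝ)^(-σ))^n := by
    intro p hp n
    simp only [hf]
    push_cast
    rw [← Real.rpow_natCast (p:ℝ) n, ← Real.rpow_mul (Nat.cast_nonneg p), mul_comm,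
      Real.rpow_mul (Nat.cast_nonneg p), Real.rpow_natCast]
  have hlt1 : ∀ (p : ℕ), p.Prime → (p:ℝ)^(-σ) < 1 := by
    intro p hp
    exact Real.rpow_lt_one_of_one_lt_of_neg (by exact_mod_cast hp.one_lt) (by linarith)
  have hsum : ∀ {p : ℕ}, p.Prime → Summable (fun n : ℕ => ‖f (p^n)‖) := by
    intro p hp
    have : (fun n : ℕ => ‖f (p^n)‖) = fun n : ℕ => ((p:ℝ)^(-σ))^n := by
      funext n
      rw [hpt p hp n, Real.norm_of_nonneg (by positivity)]
    rw [this]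
    exact summable_geometric_of_lt_one (Real.rpow_nonneg (Nat.cast_nonneg p) _) (hlt1 p hp)
  obtain ⟨hsumm, hhs⟩ :=
    EulerProduct.summable_and_hasSum_smoothNumbers_prod_primesBelow_tsum hf₁ hmul hsum N
  have hts : (∑' m : N.smoothNumbers, f m) = ∏ p ∈ N.primesBelow, ∑' n : ℕ, f (p^n) :=
    hhs.tsum_eq
  have geo : ∀ p ∈ N.primesBelow, (∑' n : ℕ, f (p^n)) = (1 - (p:ℝ)^(-σ))⁻¹ := by
    intro p hp
    have hpp := (Nat.mem_primesBelow.mp hp).2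
    have : (fun n : ℕ => f (p^n)) = fun n : ℕ => ((p:ℝ)^(-σ))^n := funext (hpt p hpp)
    rw [this]
    exact tsum_geometric_of_lt_one (Real.rpow_nonneg (Nat.cast_nonneg p) _) (hlt1 p hpp)
  set G := (Finset.Icc 2 ⌊x⌋₊).filter (· ∈ Nat.smoothNumbers N) with hG
  calc (G.card : ℝ) = ∑ _m ∈ G, (1:ℝ) := by rw [Finset.sum_const, nsmul_eq_mul, mul_one]
    _ ≤ ∑ m ∈ G, x ^ σ * f m := by
        apply Finset.sum_le_sum
        intro m hm
        obtain ⟨hmem, _⟩ := Finset.mem_filter.mp hm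
        obtain ⟨hm2, hmM⟩ := Finset.mem_Icc.mp hmem
        have hmx : (m:ℝ) ≤ x := le_trans (by exact_mod_cast hmM) (Nat.floor_le hx)
        have hm0 : (0:ℝ) < m := by exact_mod_cast (by omega : 0 < m)
        have h1 : (m:ℝ)^σ ≤ x^σ := Real.rpow_le_rpow (le_of_lt hm0) hmx hσ0.le
        have h2 : f m = ((m:ℝ)^σ)⁻¹ := by
          simp only [hf]; rw [Real.rpow_neg (le_of_lt hm0)]
        rw [h2]
        rw [← div_eq_mul_inv, le_div_iff₀ (by positivity : (0:ℝ) < (m:ℝ)^σ)]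
        linarith
    _ = x ^ σ * ∑ m ∈ G, f m := by rw [Finset.mul_sum]
    _ ≤ x ^ σ * ∏ p ∈ N.primesBelow, (1 - (p:ℝ)^(-σ))⁻¹ := by
        apply mul_le_mul_of_nonneg_left _ (Real.rpow_nonneg hx σ)
        have hsub : ∑ m ∈ G, f m = ∑ m ∈ G.subtype (· ∈ Nat.smoothNumbers N), f m := by
          rw [Finset.sum_subtype_of_mem]
          intro m hm
          exact (Finset.mem_filter.mp hm).2
        rw [hsub]
        calc ∑ m ∈ G.subtype (· ∈ Nat.smoothNumbers N), f m
            ≤ ∑' m : N.smoothNumbers, f m :=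
              Summable.sum_le_tsum _ (fun i _ => hfnn i) hsumm.of_norm
          _ = ∏ p ∈ N.primesBelow, (1 - (p:ℝ)^(-σ))⁻¹ := by
              rw [hts]
              exact Finset.prod_congr rfl geo


lemma prodbound (N : ℕ) (σ : ℝ) (hσ : 1/2 ≤ σ) (hσ1 : σ ≤ 1) :
    ∏ p ∈ N.primesBelow, (1 - (p:ℝ)^(-σ))⁻¹
      ≤ Real.exp (4 * ∑ p ∈ N.primesBelow, (p:ℝ)^(-σ)) := by
  have key : ∀ p ∈ N.primesBelow, (1 - (p:ℝ)^(-σ))⁻¹ ≤ Real.exp (4 * (p:ℝ)^(-σ)) := by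
    intro p hp
    have hpp := (Nat.mem_primesBelow.mp hp).2
    have hp2 : (2:ℝ) ≤ p := by exact_mod_cast hpp.two_le
    set t := (p:ℝ)^(-σ) with ht
    have ht0 : 0 ≤ t := Real.rpow_nonneg (by positivity) _
    have hle : t ≤ 3/4 := by
      have h1 : (2:ℝ)^(1/2 : ℝ) ≤ (p:ℝ)^σ :=
        le_trans (Real.rpow_le_rpow_of_exponent_le (by norm_num) hσ)
          (Real.rpow_le_rpow (by norm_num) hp2 (by linarith))
      have h2 : (4:ℝ)/3 ≤ (2:ℝ)^(1/2:ℝ) := by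
        have hsq : ((2:ℝ)^(1/2:ℝ))^(2:ℕ) = 2 := by
          rw [← Real.rpow_natCast ((2:ℝ)^(1/2:ℝ)) 2, ← Real.rpow_mul (by norm_num)]
          norm_num
        nlinarith [Real.rpow_nonneg (show (0:ℝ) ≤ 2 by norm_num) (1/2:ℝ)]
      have h3 : (4:ℝ)/3 ≤ (p:ℝ)^σ := le_trans h2 h1
      have h4 : t = ((p:ℝ)^σ)⁻¹ := by rw [ht, Real.rpow_neg (by positivity)]
      rw [h4]
      rw [inv_le_comm₀ (by linarith) (by norm_num)]
      linarith
    have h5 : (1 - t)⁻¹ ≤ 1 + 4*t := by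
      have hpos : (0:ℝ) < 1 - t := by linarith
      have := (div_le_iff₀ hpos).mpr (by nlinarith : (1:ℝ) ≤ (1+4*t)*(1-t))
      simpa [one_div] using this
    calc (1-t)⁻¹ ≤ 1 + 4*t := h5
      _ ≤ Real.exp (4*t) := by linarith [Real.add_one_le_exp (4*t)]
  calc ∏ p ∈ N.primesBelow, (1 - (p:ℝ)^(-σ))⁻¹
      ≤ ∏ p ∈ N.primesBelow, Real.exp (4 * (p:ℝ)^(-σ)) := by
        apply Finset.prod_le_prod _ key
        intro p hp
        have hpp := (Nat.mem_primesBelow.mp hp).2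
        have hp2 : (1:ℝ) < p := by exact_mod_cast hpp.one_lt
        have : (p:ℝ)^(-σ) < 1 := Real.rpow_lt_one_of_one_lt_of_neg hp2 (by linarith)
        exact inv_nonneg.mpr (by linarith)
      _ = Real.exp (4 * ∑ p ∈ N.primesBelow, (p:ℝ)^(-σ)) := by
        rw [← Real.exp_sum, Finset.mul_sum]



set_option maxHeartbeats 1000000 in
theorem stmt12 :
    ∃ C : ℝ, 0 < C ∧ ∃ x₀ : ℝ, ∀ x : ℝ, x₀ ≤ x →
      (Nat.card {n : ℕ | 2 ≤ n ∧ (n : ℝ) ≤ x ∧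
          ¬(x ^ (1 / Real.log (Real.log x)) < (P n : ℝ) ∧
            x ^ (1 / Real.log (Real.log x)) < (P (n + 1) : ℝ))} : ℝ)
        ≤ C * x / Real.log x ^ 2 := by
  refine ⟨4, by norm_num, Real.exp (Real.exp (Real.exp 3000)), fun x hx => ?_⟩
  -- basic facts about x, u, L
  have hx1 : (1:ℝ) < x := by
    have h : (1:ℝ) < Real.exp (Real.exp (Real.exp 3000)) := by
      rw [← Real.exp_zero]
      exact Real.exp_lt_exp.mpr (Real.exp_pos _)
    linarith
  have hx0 : (0:ℝ) < x := by linarith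
  set L := Real.log x with hLdef
  have hLbig : Real.exp (Real.exp 3000) ≤ L := by
    calc Real.exp (Real.exp 3000) = Real.log (Real.exp (Real.exp (Real.exp 3000))) := by
          rw [Real.log_exp]
      _ ≤ L := Real.log_le_log (Real.exp_pos _) hx
  have hL0 : (0:ℝ) < L := lt_of_lt_of_le (Real.exp_pos _) hLbig
  set u := Real.log L with hudef
  have hubig : Real.exp 3000 ≤ u := by
    calc Real.exp 3000 = Real.log (Real.exp (Real.exp 3000)) := by rw [Real.log_exp]
      _ ≤ u := Real.log_le_log (Real.exp_pos _) hLbig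
  have hu0 : (0:ℝ) < u := lt_of_lt_of_le (Real.exp_pos _) hubig
  have hlogu : (3000:ℝ) ≤ Real.log u := by
    calc (3000:ℝ) = Real.log (Real.exp 3000) := by rw [Real.log_exp]
      _ ≤ Real.log u := Real.log_le_log (Real.exp_pos _) hubig
  have hlogu0 : (0:ℝ) < Real.log u := by linarith
  have hu27 : (3001:ℝ) ≤ u := le_trans (by linarith [Real.add_one_le_exp (3000:ℝ)]) hubig
  have hLeu : L = Real.exp u := (Real.exp_log hL0).symm
  have hloguu : Real.log u ≤ u := by
    have := Real.log_le_sub_one_of_pos hu0; linarith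
  -- y
  set y := x ^ ((1:ℝ)/u) with hydef
  have hlogy : Real.log y = L / u := by
    rw [hydef, Real.log_rpow hx0]; field_simp; exact hLdef.symm
  have hly0 : (0:ℝ) < Real.log y := by rw [hlogy]; positivity
  have hy1 : (1:ℝ) ≤ y := by
    rw [hydef]
    calc (1:ℝ) = (1:ℝ) ^ ((1:ℝ)/u) := (Real.one_rpow _).symm
      _ ≤ x ^ ((1:ℝ)/u) := Real.rpow_le_rpow (by norm_num) hx1.le (by positivity)
  set N := ⌊y⌋₊ + 1 with hNdef
  have hN1 : 1 ≤ N := by omega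
  -- δ
  set δ := Real.log u / (2 * Real.log y) with hδdef
  have hδ0 : 0 < δ := by rw [hδdef]; positivity
  have hδL : δ * L = u * Real.log u / 2 := by
    rw [hδdef, hlogy]
    field_simp
  have hu2exp : u^2 ≤ Real.exp u := by
    have h1 : (u/3 + 1)^(3:ℕ) ≤ (Real.exp (u/3))^(3:ℕ) :=
      pow_le_pow_left₀ (by positivity) (Real.add_one_le_exp (u/3)) 3
    have h2 : (Real.exp (u/3))^(3:ℕ) = Real.exp u := by
      rw [← Real.exp_nat_mul]
      congr 1
      push_cast
      ring
    nlinarith [hu27]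
  have hδhalf : δ ≤ 1/2 := by
    have h1 : δ = u * Real.log u / (2 * L) := by
      rw [hδdef, hlogy]
      field_simp
    have h2 : u * Real.log u ≤ L := by
      rw [hLeu]; nlinarith
    rw [h1, div_le_iff₀ (by positivity)]
    linarith
  have hδlog2 : δ * Real.log 2 ≤ 1 := by
    have := Real.log_two_lt_d9
    nlinarith
  have hδlogy : δ * Real.log y = Real.log u / 2 := by
    rw [hδdef]; field_simp
  set σ := 1 - δ with hσdef
  clear_value σ
  have hσhalf : 1/2 ≤ σ := by rw [hσdef]; linarith
  have hσ1 : σ ≤ 1 := by rw [hσdef]; linarith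
  have hσ0 : 0 < σ := by linarith
  -- the finset G
  set G := (Finset.Icc 2 ⌊x+1⌋₊).filter (· ∈ Nat.smoothNumbers N) with hGdef
  clear_value G
  -- smoothness criterion
  have hsmooth : ∀ m : ℕ, m ≠ 0 → (P m : ℝ) ≤ y → m ∈ Nat.smoothNumbers N := by
    intro m hm0 hPm
    refine ⟨hm0, fun p hp => ?_⟩
    have hpf : p ∈ m.primeFactors := by
      rw [Nat.mem_primeFactors]
      exact ⟨Nat.prime_of_mem_primeFactorsList hp, Nat.dvd_of_mem_primeFactorsList hp, hm0⟩
    have hple : p ≤ P m := Finset.le_sup (f := id) hpf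
    have : (p:ℝ) ≤ y := le_trans (by exact_mod_cast hple) hPm
    have : p ≤ ⌊y⌋₊ := Nat.le_floor this
    omega
  -- subset property
  have hsub : {n : ℕ | 2 ≤ n ∧ (n : ℝ) ≤ x ∧ ¬(y < (P n : ℝ) ∧ y < (P (n + 1) : ℝ))}
      ⊆ ↑(G ∪ G.image (· - 1)) := by
    intro n hn
    obtain ⟨h2, hxn, hnot⟩ := hn
    have hnM : n ≤ ⌊x+1⌋₊ := Nat.le_floor (by linarith)
    simp only [Finset.coe_union, Set.mem_union, Finset.mem_coe]
    rcases not_and_or.mp hnot with h | h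
    · left
      rw [not_lt] at h
      rw [hGdef, Finset.mem_filter]
      exact ⟨Finset.mem_Icc.mpr ⟨h2, hnM⟩, hsmooth n (by omega) h⟩
    · right
      rw [not_lt] at h
      rw [Finset.mem_image]
      refine ⟨n+1, ?_, rfl⟩
      rw [hGdef, Finset.mem_filter]
      refine ⟨Finset.mem_Icc.mpr ⟨by omega, Nat.le_floor (by push_cast; linarith)⟩,
        hsmooth (n+1) (by omega) h⟩
  -- cardinality bound
  have hcard : (Nat.card {n : ℕ | 2 ≤ n ∧ (n : ℝ) ≤ x ∧ ¬(y < (P n : ℝ) ∧ y < (P (n + 1) : ℝ))} : ℝ)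
      ≤ 2 * G.card := by
    have h1 := Nat.card_mono (Finset.finite_toSet _) hsub
    simp only [Nat.card_coe_set_eq, Set.ncard_coe_finset] at h1
    have h2 : (G ∪ G.image (· - 1)).card ≤ G.card + (G.image (· - 1)).card :=
      Finset.card_union_le _ _
    have h3 : (G.image (· - 1)).card ≤ G.card := Finset.card_image_le
    have h4 : {n : ℕ | 2 ≤ n ∧ (n : ℝ) ≤ x ∧ ¬(y < (P n : ℝ) ∧ y < (P (n + 1) : ℝ))}.ncard
        ≤ 2 * G.card := by omega
    rw [Nat.card_coe_set_eq]
    exact_mod_cast h4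
  -- Rankin + product bound + S bound
  have hrank : (G.card : ℝ) ≤ (x+1) ^ σ * ∏ p ∈ N.primesBelow, (1 - (p:ℝ) ^ (-σ))⁻¹ := by
    rw [hGdef]
    exact rankin N σ hσ0 (x+1) (by positivity)
  set S := ∑ p ∈ N.primesBelow, (p:ℝ)^(-σ) with hSdef
  have hprod : ∏ p ∈ N.primesBelow, (1 - (p:ℝ)^(-σ))⁻¹ ≤ Real.exp (4 * S) :=
    prodbound N σ hσhalf hσ1
  have hS : S ≤ 100 * u := by
    have h0 : S = ∑ p ∈ N.primesBelow, (p:ℝ) ^ (-(1-δ)) := by rw [hSdef, hσdef]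
    have h1 := Sbound N hN1 δ hδ0 hδlog2 hδhalf
    rw [← h0] at h1
    -- bound the two terms
    have hl2 : (0.6931471803:ℝ) < Real.log 2 := Real.log_two_gt_d9
    have ht1 : Real.log (2/(δ*Real.log 2)) ≤ u + 3 := by
      have ha : 2/(δ*Real.log 2) ≤ 8 * L := by
        have hδL' : δ = u * Real.log u / (2 * L) := by
          rw [hδdef, hlogy]
          field_simp
        have h1δ : 1/δ ≤ 2 * L := by
          rw [hδL', one_div, inv_div, div_le_iff₀ (by positivity)]
          have hul : (1:ℝ) ≤ u * Real.log u := by nlinarith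
          nlinarith
        rw [div_le_iff₀ (mul_pos hδ0 (by linarith : (0:ℝ) < Real.log 2))]
        rw [div_le_iff₀ hδ0] at h1δ
        nlinarith
      calc Real.log (2/(δ*Real.log 2)) ≤ Real.log (8 * L) := by
            apply Real.log_le_log _ ha
            positivity
        _ = Real.log 8 + u := by rw [Real.log_mul (by norm_num) (ne_of_gt hL0)]
        _ ≤ u + 3 := by
            have : Real.log 8 = 3 * Real.log 2 := by
              rw [show (8:ℝ) = 2^3 by norm_num, Real.log_pow]; push_cast; ring
            have := Real.log_two_lt_d9
            nlinarith
    have ht2 : Real.exp (δ * Real.log N) ≤ Real.exp 1 * u := by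
      have hNy : (N:ℝ) ≤ 2 * y := by
        have : ((⌊y⌋₊ : ℕ):ℝ) ≤ y := Nat.floor_le (by linarith)
        rw [hNdef]
        push_cast
        linarith
      have hlogN : Real.log N ≤ Real.log 2 + Real.log y := by
        calc Real.log N ≤ Real.log (2*y) := by
              apply Real.log_le_log _ hNy
              exact_mod_cast Nat.succ_pos _
          _ = Real.log 2 + Real.log y := Real.log_mul (by norm_num) (by linarith)
      have h1 : δ * Real.log N ≤ 1 + Real.log u / 2 := by
        have := mul_le_mul_of_nonneg_left hlogN hδ0.le
        rw [mul_add] at this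
        have h2 : δ * Real.log 2 ≤ 1 := hδlog2
        linarith [this, hδlog2, hδlogy]
      calc Real.exp (δ * Real.log N) ≤ Real.exp (1 + Real.log u / 2) := Real.exp_le_exp.mpr h1
        _ = Real.exp 1 * Real.exp (Real.log u / 2) := Real.exp_add _ _
        _ ≤ Real.exp 1 * u := by
            have : Real.exp (Real.log u / 2) ≤ Real.exp (Real.log u) :=
              Real.exp_le_exp.mpr (by linarith)
            rw [Real.exp_log hu0] at this
            nlinarith [Real.exp_pos (1:ℝ)]
    have hexp1 : Real.exp 1 < 2.7182818286 := Real.exp_one_lt_d9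
    have hexp2 : Real.exp 2 < 7.39 := by
      have : Real.exp 2 = Real.exp 1 * Real.exp 1 := by
        rw [← Real.exp_add]; norm_num
      nlinarith [Real.exp_pos (1:ℝ)]
    have hexp1' : (0:ℝ) < Real.exp 1 := Real.exp_pos 1
    have hexp2' : (0:ℝ) < Real.exp 2 := Real.exp_pos 2
    calc S ≤ 4*Real.exp 2*(1 + Real.log (2/(δ*Real.log 2))) + 4*Real.exp 1 * Real.exp (δ * Real.log N) := h1
      _ ≤ 4*Real.exp 2*(1 + (u+3)) + 4*Real.exp 1 * (Real.exp 1 * u) := by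
          have b1 : 4*Real.exp 2*(1 + Real.log (2/(δ*Real.log 2))) ≤ 4*Real.exp 2*(1 + (u+3)) := by
            apply mul_le_mul_of_nonneg_left _ (by positivity)
            linarith
          have b2 : 4*Real.exp 1 * Real.exp (δ * Real.log N) ≤ 4*Real.exp 1 * (Real.exp 1 * u) := by
            apply mul_le_mul_of_nonneg_left ht2 (by positivity)
          linarith
      _ = 4*Real.exp 2*(u+4) + 4*(Real.exp 1*Real.exp 1)*u := by ring
      _ = 4*Real.exp 2*(u+4) + 4*Real.exp 2*u := by
          rw [show Real.exp 1 * Real.exp 1 = Real.exp 2 by rw [← Real.exp_add]; norm_num]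
      _ ≤ 100 * u := by
          have hb1 : Real.exp 2 * u ≤ 7.39 * u := mul_le_mul_of_nonneg_right hexp2.le hu0.le
          linarith [hb1, hexp2, hu27]
  -- assemble
  have hxσ : (x+1)^σ ≤ 2 * x^σ := by
    calc (x+1)^σ ≤ (2*x)^σ := Real.rpow_le_rpow (by positivity) (by linarith) hσ0.le
      _ = 2^σ * x^σ := Real.mul_rpow (by norm_num) hx0.le
      _ ≤ 2 * x^σ := by
          apply mul_le_mul_of_nonneg_right _ (Real.rpow_nonneg hx0.le σ)
          calc (2:ℝ)^σ ≤ (2:ℝ)^(1:ℝ) := Real.rpow_le_rpow_of_exponent_le (by norm_num) hσ1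
            _ = 2 := Real.rpow_one 2
  have hxσval : x^σ = x * Real.exp (-(δ*L)) := by
    rw [Real.rpow_def_of_pos hx0, hσdef]
    rw [show Real.log x * (1 - δ) = Real.log x + (-(δ * L)) by rw [hLdef]; ring]
    rw [Real.exp_add, Real.exp_log hx0]
  have hfinal : (2:ℝ) * G.card ≤ 4 * x / L^2 := by
    have hL2 : L^2 = Real.exp (2*u) := by
      rw [hLeu, sq, ← Real.exp_add]; ring_nf
    have hchain : (2:ℝ) * G.card ≤ 4 * x * Real.exp (-(δ*L) + 4*S) := by
      calc (2:ℝ) * G.card ≤ 2 * ((x+1) ^ σ * ∏ p ∈ N.primesBelow, (1 - (p:ℝ) ^ (-σ))⁻¹) := by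
            apply mul_le_mul_of_nonneg_left hrank (by norm_num)
        _ ≤ 2 * ((x+1)^σ * Real.exp (4*S)) := by
            apply mul_le_mul_of_nonneg_left _ (by norm_num)
            apply mul_le_mul_of_nonneg_left hprod (Real.rpow_nonneg (by positivity) σ)
        _ ≤ 2 * ((2 * x^σ) * Real.exp (4*S)) := by
            apply mul_le_mul_of_nonneg_left _ (by norm_num)
            apply mul_le_mul_of_nonneg_right hxσ (Real.exp_nonneg _)
        _ = 4 * x * Real.exp (-(δ*L) + 4*S) := by
            rw [hxσval, Real.exp_add]; ring
    have hexpb : Real.exp (-(δ*L) + 4*S) ≤ Real.exp (-(2*u)) := by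
      apply Real.exp_le_exp.mpr
      have h1 : 4*S ≤ 400*u := by linarith
      have h2 : δ * L = u * Real.log u / 2 := hδL
      have h3 : u * 3000 ≤ u * Real.log u := mul_le_mul_of_nonneg_left hlogu hu0.le
      linarith
    calc (2:ℝ) * G.card ≤ 4 * x * Real.exp (-(δ*L) + 4*S) := hchain
      _ ≤ 4 * x * Real.exp (-(2*u)) := mul_le_mul_of_nonneg_left hexpb (by positivity)
      _ = 4 * x / L^2 := by
          rw [hL2, Real.exp_neg]
          ring
  exact le_trans hcard hfinal
end

section
/- Let m ≥ 1 be an integer and let n ≥ 2 be an integer with f_{−m}(n) = f_{−m}(n+1). Then for every prime p dividing n, p^m divides the exponent of p in the prime factorization of n, and for every prime q dividing n+1, q^m divides the exponent of q in the prime factorization of n+1. -/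
/-- The Ruth–Aaron function with negative exponent `-m`, as a rational:
`fq m n = ∑ aᵢ / pᵢ^m` for `n = p₁^{a₁} ⋯ p_k^{a_k}`. -/
def fq (m : ℕ) (n : ℕ) : ℚ :=
  ∑ p ∈ n.primeFactors, (n.factorization p : ℚ) / (p : ℚ) ^ m

lemma term_norm_le (p : ℕ) [hp : Fact p.Prime] (m c q : ℕ) (hq : ¬ p ∣ q) :
    padicNorm p ((c : ℚ) / (q : ℚ) ^ m) ≤ 1 := by
  have hqm : padicNorm p ((q : ℚ) ^ m) = 1 := by
    have : ((q : ℚ) ^ m) = ((q ^ m : ℕ) : ℚ) := by push_cast; ring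
    rw [this, padicNorm.nat_eq_one_iff]
    intro hd
    exact hq (hp.out.dvd_of_dvd_pow hd)
  rw [padicNorm.div, hqm, div_one]
  exact padicNorm.of_nat c

lemma key (m a b : ℕ) (ha : 2 ≤ a) (hab : Nat.Coprime a b)
    (h : fq m a = fq m b) (p : ℕ) (hp : p.Prime) (hpa : p ∣ a) :
    p ^ m ∣ a.factorization p := by
  haveI : Fact p.Prime := ⟨hp⟩
  set c := a.factorization p with hc
  have ha0 : a ≠ 0 := by omega
  have hpmem : p ∈ a.primeFactors := Nat.mem_primeFactors.2 ⟨hp, hpa, ha0⟩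
  have hc0 : c ≠ 0 := by
    simpa [hc, Nat.Prime.factorization_pos_of_dvd hp ha0 hpa] using
      (Nat.Prime.factorization_pos_of_dvd hp ha0 hpa).ne'
  rw [padicValNat_dvd_iff_le hc0]
  by_contra hlt
  push_neg at hlt
  -- x is the p-term
  set x : ℚ := (c : ℚ) / (p : ℚ) ^ m with hx
  have hsplit : fq m a = x + ∑ q ∈ a.primeFactors.erase p,
      ((a.factorization q : ℚ) / (q : ℚ) ^ m) := by
    rw [fq, ← Finset.add_sum_erase _ _ hpmem]
  have hxeq : x = fq m b - ∑ q ∈ a.primeFactors.erase p,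
      ((a.factorization q : ℚ) / (q : ℚ) ^ m) := by
    rw [← h, hsplit]; ring
  have hb1 : padicNorm p (fq m b) ≤ 1 := by
    refine padicNorm.sum_le' (fun q hq => ?_) zero_le_one
    refine term_norm_le p m _ q (fun hd => ?_)
    have hqb : q ∣ b := Nat.dvd_of_mem_primeFactors hq
    have : p ∣ Nat.gcd a b := Nat.dvd_gcd hpa (hd.trans hqb)
    rw [hab] at this
    exact hp.ne_one (Nat.eq_one_of_dvd_one this)
  have hrest : padicNorm p (∑ q ∈ a.primeFactors.erase p,
      ((a.factorization q : ℚ) / (q : ℚ) ^ m)) ≤ 1 := by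
    refine padicNorm.sum_le' (fun q hq => ?_) zero_le_one
    have hqp : q ≠ p := Finset.ne_of_mem_erase hq
    have hqprime : q.Prime := Nat.prime_of_mem_primeFactors (Finset.mem_of_mem_erase hq)
    refine term_norm_le p m _ q (fun hd => ?_)
    exact hqp ((Nat.prime_dvd_prime_iff_eq hp hqprime).1 hd).symm
  have hle : padicNorm p x ≤ 1 := by
    rw [hxeq]
    exact le_trans padicNorm.sub (max_le hb1 hrest)
  -- compute padicNorm p x
  have hcq : (c : ℚ) ≠ 0 := Nat.cast_ne_zero.2 hc0
  have hnormc : padicNorm p (c : ℚ) = (p : ℚ) ^ (-(padicValNat p c : ℤ)) := by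
    rw [padicNorm.eq_zpow_of_nonzero hcq, padicValRat.of_nat]
  have hnormpm : padicNorm p ((p : ℚ) ^ m) = (p : ℚ) ^ (-(m : ℤ)) := by
    have : ((p : ℚ) ^ m) = (((p ^ m : ℕ)) : ℚ) := by push_cast; ring
    rw [this, padicNorm.eq_zpow_of_nonzero (by exact_mod_cast pow_ne_zero m (Nat.cast_ne_zero.2 hp.pos.ne' : (p:ℚ) ≠ 0)), padicValRat.of_nat,
      padicValNat.prime_pow]
  have hxnorm : padicNorm p x = (p : ℚ) ^ ((m : ℤ) - (padicValNat p c : ℤ)) := by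
    rw [hx, padicNorm.div, hnormc, hnormpm, ← zpow_sub₀ (Nat.cast_ne_zero.2 hp.pos.ne' : (p:ℚ) ≠ 0)]
    ring_nf
  have hp1 : (1 : ℚ) < (p : ℚ) := by exact_mod_cast hp.one_lt
  have : (1 : ℚ) < padicNorm p x := by
    rw [hxnorm]
    have : (0 : ℤ) < (m : ℤ) - (padicValNat p c : ℤ) := by omega
    calc (1:ℚ) = (p:ℚ) ^ (0:ℤ) := by simp
    _ < _ := by exact zpow_lt_zpow_right₀ hp1 this
  linarith

theorem stmt16 (m : ℕ) (hm : 1 ≤ m) (n : ℕ) (hn : 2 ≤ n)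
    (h : fq m n = fq m (n + 1)) :
    (∀ p : ℕ, p.Prime → p ∣ n → p ^ m ∣ n.factorization p) ∧
    (∀ q : ℕ, q.Prime → q ∣ (n + 1) → q ^ m ∣ (n + 1).factorization q) := by
  constructor
  · exact fun p hp hpn => key m n (n+1) hn ((by simp)) h p hp hpn
  · exact fun q hq hqn => key m (n+1) n (by omega)
      (by simp : Nat.Coprime (n+1) n) h.symm q hq hqn
end

section
/- If n ≥ 2 is an integer such that both n and n+1 have no prime factor greater than 3 (i.e., n and n+1 are both 3-smooth), then n ≤ 8. -/
private lemma smooth_form : ∀ n : ℕ, n ≠ 0 → (∀ p : ℕ, p.Prime → p ∣ n → p ≤ 3) →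
    ∃ a b : ℕ, n = 2 ^ a * 3 ^ b := by
  intro n
  induction n using Nat.strong_induction_on with
  | _ n ih =>
    intro hn h
    rcases eq_or_ne n 1 with rfl | h1
    · exact ⟨0, 0, rfl⟩
    · have hp := Nat.minFac_prime h1
      have hd := Nat.minFac_dvd n
      have hle := h _ hp hd
      have h2le := hp.two_le
      obtain ⟨m, hm⟩ := hd
      have hm0 : m ≠ 0 := by rintro rfl; simp at hm; exact hn hm
      have hmlt : m < n := by
        rw [hm]
        have : 2 * m ≤ n.minFac * m := Nat.mul_le_mul_right m h2le
        omega
      obtain ⟨a, b, hab⟩ := ih m hmlt hm0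
        (fun p pp pd => h p pp (hm ▸ pd.mul_left _))
      have : n.minFac = 2 ∨ n.minFac = 3 := by omega
      rcases this with h2 | h3
      · exact ⟨a + 1, b, by rw [hm, hab, h2]; ring⟩
      · exact ⟨a, b + 1, by rw [hm, hab, h3]; ring⟩

private lemma mod8 : ∀ k : ℕ, 3 ^ k % 8 = 1 ∨ 3 ^ k % 8 = 3 := by
  intro k
  induction k with
  | zero => left; rfl
  | succ k ih =>
    rw [pow_succ]
    omega

private lemma mod4 : ∀ k : ℕ, (3 ^ k % 4 = 1 ∧ k % 2 = 0) ∨ (3 ^ k % 4 = 3 ∧ k % 2 = 1) := by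
  intro k
  induction k with
  | zero => left; exact ⟨rfl, rfl⟩
  | succ k ih =>
    rw [pow_succ]
    omega

private lemma pow_succ_eq : ∀ k e : ℕ, 3 ^ k + 1 = 2 ^ e → k ≤ 1 := by
  intro k e h
  by_contra hk
  push_neg at hk
  have h9 : 9 ≤ 3 ^ k := by
    calc (9 : ℕ) = 3 ^ 2 := rfl
    _ ≤ 3 ^ k := Nat.pow_le_pow_right (by norm_num) hk
  have he : 4 ≤ e := by
    by_contra he
    push_neg at he
    have : 2 ^ e ≤ 2 ^ 3 := Nat.pow_le_pow_right (by norm_num) (by omega)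
    omega
  have : (8 : ℕ) ∣ 2 ^ e := by
    calc (8 : ℕ) = 2 ^ 3 := rfl
    _ ∣ 2 ^ e := pow_dvd_pow 2 (by omega)
  have := mod8 k
  omega

theorem stmt17 (n : ℕ) (hn : 2 ≤ n)
    (h1 : ∀ p : ℕ, p.Prime → p ∣ n → p ≤ 3)
    (h2 : ∀ p : ℕ, p.Prime → p ∣ (n + 1) → p ≤ 3) :
    n ≤ 8 := by
  by_contra hgt
  push_neg at hgt
  obtain ⟨a, b, hab⟩ := smooth_form n (by omega) h1
  obtain ⟨c, d, hcd⟩ := smooth_form (n + 1) (by omega) h2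
  rcases Nat.even_or_odd n with he | ho
  · -- n even, so n+1 odd: c = 0, n+1 = 3^d, and 3 ∣ n+1 so b = 0, n = 2^a
    have hc : c = 0 := by
      by_contra hc
      have : (2 : ℕ) ∣ n + 1 := hcd ▸ Dvd.dvd.mul_right (dvd_pow_self 2 hc) _
      obtain ⟨t, ht⟩ := he
      omega
    rw [hc, pow_zero, one_mul] at hcd
    have hd1 : 1 ≤ d := by
      by_contra hd
      push_neg at hd
      interval_cases d <;> omega
    have hb : b = 0 := by
      by_contra hb
      have h3n : (3 : ℕ) ∣ n := hab ▸ Dvd.dvd.mul_left (dvd_pow_self 3 hb) _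
      have h3n1 : (3 : ℕ) ∣ n + 1 := hcd ▸ dvd_pow_self 3 (by omega)
      omega
    rw [hb, pow_zero, mul_one] at hab
    -- 2^a + 1 = 3^d, n ≥ 9
    have ha2 : 2 ≤ a := by
      by_contra ha
      push_neg at ha
      interval_cases a <;> omega
    have h4 : (4 : ℕ) ∣ 2 ^ a := by
      calc (4 : ℕ) = 2 ^ 2 := rfl
      _ ∣ 2 ^ a := pow_dvd_pow 2 ha2
    have hdmod : 3 ^ d % 4 = 1 := by omega
    have hdeven : d % 2 = 0 := by rcases mod4 d with ⟨_, h⟩ | ⟨h, _⟩ <;> omega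
    obtain ⟨k, hk⟩ : ∃ k, d = 2 * k := ⟨d / 2, by omega⟩
    have h1le : 1 ≤ 3 ^ k := Nat.one_le_pow _ _ (by norm_num)
    have key : (3 ^ k + 1) * (3 ^ k - 1) + 1 = 3 ^ k * 3 ^ k := by
      obtain ⟨t, ht⟩ := Nat.exists_eq_add_of_le h1le
      rw [ht]
      have h' : 1 + t - 1 = t := by omega
      rw [h']
      ring
    have hdeq : 3 ^ d = 3 ^ k * 3 ^ k := by rw [hk, two_mul, pow_add]
    have hfac : (3 ^ k + 1) * (3 ^ k - 1) = 2 ^ a := by omega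
    have hdvd : (3 ^ k + 1) ∣ 2 ^ a := ⟨3 ^ k - 1, hfac.symm⟩
    obtain ⟨e, _, hee⟩ := (Nat.dvd_prime_pow Nat.prime_two).mp hdvd
    have hk1 : k ≤ 1 := pow_succ_eq k e hee
    have : 3 ^ d ≤ 3 ^ 2 := Nat.pow_le_pow_right (by norm_num) (by omega)
    omega
  · -- n odd: a = 0, n = 3^b, 3 ∣ n so d = 0, n+1 = 2^c
    have ha : a = 0 := by
      by_contra ha
      have : (2 : ℕ) ∣ n := hab ▸ Dvd.dvd.mul_right (dvd_pow_self 2 ha) _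
      obtain ⟨t, ht⟩ := ho
      omega
    rw [ha, pow_zero, one_mul] at hab
    have hb1 : 1 ≤ b := by
      by_contra hb
      push_neg at hb
      interval_cases b <;> omega
    have hd : d = 0 := by
      by_contra hd
      have h3n : (3 : ℕ) ∣ n := hab ▸ dvd_pow_self 3 (by omega)
      have h3n1 : (3 : ℕ) ∣ n + 1 := hcd ▸ Dvd.dvd.mul_left (dvd_pow_self 3 hd) _
      omega
    rw [hd, pow_zero, mul_one] at hcd
    have hb1' : b ≤ 1 := pow_succ_eq b c (by omega)
    interval_cases b <;> omega
end

section
/- Let r ≥ 1 be a real number and let k, m be positive integers with k ≠ m. Then there is at most one pair of primes (p, q) satisfying both p·k + 1 = q·m and p^r + f_r(k) = q^r + f_r(m). -/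
lemma mono_diff (r : ℝ) (hr : 1 ≤ r) (d : ℝ) (hd : 0 ≤ d) :
    MonotoneOn (fun x : ℝ => (x + d) ^ r - x ^ r) (Set.Ici 0) := by
  have h0r : (0:ℝ) ≤ r := by linarith
  apply monotoneOn_of_deriv_nonneg (convex_Ici 0)
  · exact ((Real.continuous_rpow_const h0r).comp (continuous_add_right d)).continuousOn.sub
      (Real.continuous_rpow_const h0r).continuousOn
  · intro x hx
    rw [interior_Ici] at hx
    have hx : (0:ℝ) < x := hx
    have h1 : HasDerivAt (fun x : ℝ => (x + d) ^ r) (r * (x + d) ^ (r - 1) * 1) x := by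
      exact (Real.hasDerivAt_rpow_const (Or.inl (by linarith))).comp x
        ((hasDerivAt_id x).add_const d)
    exact ((h1.sub ((Real.hasDerivAt_rpow_const (p := r) (Or.inl hx.ne')))).differentiableAt).differentiableWithinAt
  · intro x hx
    rw [interior_Ici] at hx
    have hx : (0:ℝ) < x := hx
    have h1 : HasDerivAt (fun x : ℝ => (x + d) ^ r) (r * (x + d) ^ (r - 1) * 1) x :=
      (Real.hasDerivAt_rpow_const (Or.inl (by linarith))).comp x
        ((hasDerivAt_id x).add_const d)
    have h2 : deriv (fun x : ℝ => (x + d) ^ r - x ^ r) x = _ := (h1.sub ((Real.hasDerivAt_rpow_const (p := r) (Or.inl hx.ne')))).deriv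
    rw [h2]
    have : x ^ (r-1) ≤ (x + d) ^ (r-1) :=
      Real.rpow_le_rpow hx.le (by linarith) (by linarith)
    nlinarith

lemma key_s18 (r : ℝ) (hr : 1 ≤ r) {a b d e : ℝ} (hb : 0 ≤ b) (hba : b ≤ a) (hd : 0 ≤ d)
    (hde : d < e) : (b + d) ^ r - b ^ r < (a + e) ^ r - a ^ r := by
  have h1 : (b + d) ^ r - b ^ r ≤ (a + d) ^ r - a ^ r :=
    mono_diff r hr d hd hb (by linarith : (0:ℝ) ≤ a) hba
  have h2 : (a + d) ^ r < (a + e) ^ r :=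
    Real.rpow_lt_rpow (by linarith) (by linarith) (by linarith)
  linarith

theorem stmt18 (r : ℝ) (hr : 1 ≤ r) (k m : ℕ) (hk : 0 < k) (hm : 0 < m)
    (hkm : k ≠ m) :
    {pq : ℕ × ℕ | pq.1.Prime ∧ pq.2.Prime ∧ pq.1 * k + 1 = pq.2 * m ∧
      (pq.1 : ℝ) ^ r + fr r k = (pq.2 : ℝ) ^ r + fr r m}.Subsingleton := by
  have hkR : (0:ℝ) < k := by exact_mod_cast hk
  have hmR : (0:ℝ) < m := by exact_mod_cast hm
  have main : ∀ p₁ q₁ p₂ q₂ : ℕ, p₁.Prime → q₁.Prime → p₂.Prime → q₂.Prime →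
      p₁ * k + 1 = q₁ * m → p₂ * k + 1 = q₂ * m →
      (p₁ : ℝ) ^ r + fr r k = (q₁ : ℝ) ^ r + fr r m →
      (p₂ : ℝ) ^ r + fr r k = (q₂ : ℝ) ^ r + fr r m →
      p₁ < p₂ → False := by
    intro p₁ q₁ p₂ q₂ hp₁ hq₁ hp₂ hq₂ hl₁ hl₂ he₁ he₂ hlt
    have hl₁R : (p₁:ℝ) * k + 1 = (q₁:ℝ) * m := by exact_mod_cast hl₁
    have hl₂R : (p₂:ℝ) * k + 1 = (q₂:ℝ) * m := by exact_mod_cast hl₂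
    have hltR : (p₁:ℝ) < p₂ := by exact_mod_cast hlt
    have hp₁2 : (2:ℝ) ≤ p₁ := by exact_mod_cast hp₁.two_le
    have hq₁2 : (2:ℝ) ≤ q₁ := by exact_mod_cast hq₁.two_le
    have hqlt : (q₁:ℝ) < q₂ := by nlinarith
    have hdiff : ((p₂:ℝ) - p₁) * k = ((q₂:ℝ) - q₁) * m := by nlinarith
    have heqr : (p₂:ℝ) ^ r - (p₁:ℝ) ^ r = (q₂:ℝ) ^ r - (q₁:ℝ) ^ r := by linarith
    rcases lt_or_gt_of_ne hkm with hklm | hkgm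
    · -- k < m
      have hkmR : (k:ℝ) < m := by exact_mod_cast hklm
      have hk1m : (k:ℝ) + 1 ≤ m := by exact_mod_cast hklm
      have hqp : (q₁:ℝ) ≤ p₁ := by
        have h1 : (q₁:ℝ) * m ≤ (p₁:ℝ) * m := by nlinarith
        exact le_of_mul_le_mul_right h1 hmR
      have hde : (q₂:ℝ) - q₁ < (p₂:ℝ) - p₁ := by
        have h1 : ((q₂:ℝ) - q₁) * m < ((p₂:ℝ) - p₁) * m := by nlinarith
        exact lt_of_mul_lt_mul_right h1 hmR.le
      have := key_s18 r hr (a := (p₁:ℝ)) (b := (q₁:ℝ)) (d := (q₂:ℝ) - q₁) (e := (p₂:ℝ) - p₁)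
        (by linarith) hqp (by linarith) hde
      have e1 : (q₁:ℝ) + ((q₂:ℝ) - q₁) = q₂ := by ring
      have e2 : (p₁:ℝ) + ((p₂:ℝ) - p₁) = p₂ := by ring
      rw [e1, e2] at this
      linarith
    · have hkmR : (m:ℝ) < k := by exact_mod_cast hkgm
      have hqp : (p₁:ℝ) ≤ q₁ := by
        have h0 : (p₁:ℝ) * m ≤ (p₁:ℝ) * k := by
          exact mul_le_mul_of_nonneg_left hkmR.le (by linarith)
        have h1 : (p₁:ℝ) * m ≤ (q₁:ℝ) * m := by linarith
        exact le_of_mul_le_mul_right h1 hmR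
      have hde : (p₂:ℝ) - p₁ < (q₂:ℝ) - q₁ := by
        have h0 : ((p₂:ℝ) - p₁) * m < ((p₂:ℝ) - p₁) * k :=
          mul_lt_mul_of_pos_left hkmR (by linarith)
        have h1 : ((p₂:ℝ) - p₁) * m < ((q₂:ℝ) - q₁) * m := by linarith
        exact lt_of_mul_lt_mul_right h1 hmR.le
      have := key_s18 r hr (a := (q₁:ℝ)) (b := (p₁:ℝ)) (d := (p₂:ℝ) - p₁) (e := (q₂:ℝ) - q₁)
        (by linarith) hqp (by linarith) hde
      have e1 : (q₁:ℝ) + ((q₂:ℝ) - q₁) = q₂ := by ring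
      have e2 : (p₁:ℝ) + ((p₂:ℝ) - p₁) = p₂ := by ring
      rw [e1, e2] at this
      linarith
  rintro ⟨p₁, q₁⟩ ⟨hp₁, hq₁, hl₁, he₁⟩ ⟨p₂, q₂⟩ ⟨hp₂, hq₂, hl₂, he₂⟩
  simp only at *
  have hpp : p₁ = p₂ := by
    rcases lt_trichotomy p₁ p₂ with h | h | h
    · exact absurd (main p₁ q₁ p₂ q₂ hp₁ hq₁ hp₂ hq₂ hl₁ hl₂ he₁ he₂ h) (not_false)
    · exact h
    · exact absurd (main p₂ q₂ p₁ q₁ hp₂ hq₂ hp₁ hq₁ hl₂ hl₁ he₂ he₁ h) (not_false)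
  subst hpp
  have : q₁ * m = q₂ * m := by omega
  have : q₁ = q₂ := Nat.eq_of_mul_eq_mul_right hm this
  simp [this]
end
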